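/- arXiv:1607.08406 — 8 statements merged into one kernel-verified Lean document; each statement's English description precedes it below -/
import Mathlib

section
/- There exists a unique x̂ ∈ [0, ν̲) such that q(x) > 0 for all x ∈ (0, x̂) (in case x̂ > 0) and q(x) < 0 for all x ∈ (x̂, ν). -/
open MeasureTheory Set Filter Topology

set_option linter.unusedVariables false

/-- `h(0) := lim_{x↓0} h(x) ∈ [-∞, ∞)`; for a right-continuous increasing `h` this is the
infimum of `h` over `(0, ∞)`, viewed in the extended reals. -/
noncomputable def hZero (h : ℝ → ℝ) : EReal := ⨅ x ∈ Set.Ioi (0 : ℝ), (h x : EReal)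

/-- The particular solution `R_h` to the ODE `σ²x²w'' + bxw' - rw + h = 0`. -/
noncomputable def Rh (σ m n : ℝ) (h : ℝ → ℝ) (x : ℝ) : ℝ :=
  (1 / (σ ^ 2 * (n - m))) *
    (x ^ m * (∫ s in Set.Ioc (0 : ℝ) x, s ^ (-m - 1) * h s)
      + x ^ n * ∫ s in Set.Ioi x, s ^ (-n - 1) * h s)

/-- The function `q` of Lemma `auxiliar_2`. -/
noncomputable def qAux (σ m n ν L : ℝ) (h : ℝ → ℝ) (x : ℝ) : ℝ :=
  (m * x ^ (m - 1) / (σ ^ 2 * (n - m))) * (∫ s in x..ν, s ^ (-m - 1) * (h s + L))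
    - (n * x ^ (n - 1) / (σ ^ 2 * (n - m))) * ∫ s in x..ν, s ^ (-n - 1) * (h s + L)

/-!
Write `q x = x ^ (m - 1) / (σ² (n - m)) * F x` with
`F x = m ∫ₓ^ν s^(-m-1) (h + L) - n x^(n-m) ∫ₓ^ν s^(-n-1) (h + L)`. Then `F ν = 0` and
`F' x = (n - m) x^(n-m-1) G x` with `G x = x^(-n) (h x + L) - n ∫ₓ^ν s^(-n-1) (h + L)`, and `G` is
increasing because `h` is. Hence wherever `F` decreases it also decreases further to the left, so
`{F > 0}` is an initial segment `(0, x̂)` of `(0, ν)`. On `[ν̲, ν)` we have `h + L ≥ 0` (with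
`h + L > 0` near `ν`), which forces `F < 0` there, and continuity of `F` gives `x̂ < ν̲`.
-/

section SignChange

variable {f : ℝ → ℝ}

theorem le_of_pos_of_neg {b x₁ x₂ : ℝ} (h₁ : 0 ≤ x₁) (h₂ : x₂ ≤ b)
    (hpos : ∀ x, 0 < x → x < x₂ → 0 < f x) (hneg : ∀ x, x₁ < x → x < b → f x < 0) :
    x₂ ≤ x₁ := by
  by_contra! hlt
  have := hpos ((x₁ + x₂) / 2) (by linarith) (by linarith)
  have := hneg ((x₁ + x₂) / 2) (by linarith) (by linarith)
  linarith

theorem exists_sign_change {a ν : ℝ} (ha : 0 < a) (haν : a < ν) (hfν : f ν = 0)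
    (hneg : ∀ z, a ≤ z → z < ν → f z < 0)
    (hdesc : ∀ u t z, 0 < u → u < t → t ≤ z → z ≤ ν → f z < f t → f t < f u)
    (hcont : ContinuousWithinAt f (Iio a) a) :
    ∃ x₀, (0 ≤ x₀ ∧ x₀ < a) ∧ (∀ x, 0 < x → x < x₀ → 0 < f x) ∧
      (∀ x, x₀ < x → x < ν → f x < 0) := by
  set P := {t | 0 < t ∧ t < ν ∧ 0 < f t}
  have hPa : ∀ t ∈ P, t < a := fun t ht => not_le.1 fun hat => (hneg t hat ht.2.1).not_gt ht.2.2
  have hne : (insert 0 P).Nonempty := insert_nonempty 0 P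
  have hbdd : insert 0 P ⊆ Iic a := by
    rintro t (rfl | ht)
    exacts [ha.le, (hPa t ht).le]
  set x₀ := sSup (insert 0 P)
  have hx₀ : 0 ≤ x₀ := le_csSup ⟨a, hbdd⟩ (mem_insert 0 P)
  have hle_x₀ : ∀ x, 0 < x → x < ν → 0 < f x → x ≤ x₀ := fun x hx hxν hfx =>
    le_csSup ⟨a, hbdd⟩ (mem_insert_of_mem 0 ⟨hx, hxν, hfx⟩)
  -- Below a point of `P`, where `f > 0 = f ν`, `f` is larger still.
  have hpos : ∀ x, 0 < x → x < x₀ → 0 < f x := by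
    intro x hx hxx₀
    obtain ⟨t, ht | ht, hxt⟩ := exists_lt_of_lt_csSup hne hxx₀
    · exact absurd (ht ▸ hxt) hx.not_gt
    · exact ht.2.2.trans (hdesc x t ν hx hxt ht.2.1.le le_rfl (hfν ▸ ht.2.2))
  refine ⟨x₀, ⟨hx₀, ?_⟩, hpos, fun x hx₀x hxν => ?_⟩
  · refine (csSup_le hne hbdd).lt_of_ne fun hx₀a => (hneg a le_rfl haν).not_ge ?_
    refine ge_of_tendsto hcont ?_
    filter_upwards [Ioo_mem_nhdsLT ha] with x hx using (hpos x hx.1 (hx.2.trans_eq hx₀a.symm)).le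
  · rcases le_or_gt a x with hax | hxa
    · exact hneg x hax hxν
    by_contra! hfx
    have hw := hdesc ((x₀ + x) / 2) x a (by linarith) (by linarith) hxa.le haν.le
      ((hneg a le_rfl haν).trans_le hfx)
    have := hle_x₀ ((x₀ + x) / 2) (by linarith) (by linarith) (hfx.trans_lt hw)
    linarith

end SignChange

section Threshold

variable {g : ℝ → ℝ}

theorem le_sInf_of_neg (hg : MonotoneOn g (Ioi 0)) {x₀ : ℝ} (hx₀ : 0 < x₀) (hgx₀ : g x₀ < 0)
    (hne : {x | 0 < x ∧ 0 ≤ g x}.Nonempty) : x₀ ≤ sInf {x | 0 < x ∧ 0 ≤ g x} :=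
  le_csInf hne fun t ⟨ht, hgt⟩ =>
    le_of_not_gt fun htx₀ => (hgt.trans (hg ht hx₀ htx₀.le)).not_gt hgx₀

theorem nonneg_of_sInf_le (hg : MonotoneOn g (Ioi 0))
    (hrc : ∀ x, 0 < x → ContinuousWithinAt g (Ici x) x) (hne : {x | 0 < x ∧ 0 ≤ g x}.Nonempty)
    (hpos : 0 < sInf {x | 0 < x ∧ 0 ≤ g x}) {s : ℝ} (hs : sInf {x | 0 < x ∧ 0 ≤ g x} ≤ s) :
    0 ≤ g s := by
  set a := sInf {x | 0 < x ∧ 0 ≤ g x}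
  have hgt : ∀ s, a < s → 0 ≤ g s := fun s has => by
    obtain ⟨t, ⟨ht, hgt⟩, hts⟩ := exists_lt_of_csInf_lt hne has
    exact hgt.trans (hg ht (ht.trans hts) hts.le)
  rcases hs.eq_or_lt with rfl | has
  · exact ge_of_tendsto ((hrc a hpos).mono Ioi_subset_Ici_self)
      (eventually_nhdsWithin_of_forall hgt)
  · exact hgt s has

end Threshold

theorem exists_add_neg_of_hZero_add_neg {h : ℝ → ℝ} {L : ℝ} (hL : hZero h + (L : EReal) < 0) :
    ∃ x, 0 < x ∧ h x + L < 0 := by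
  by_contra! hcon
  have hle : ((-L : ℝ) : EReal) ≤ hZero h :=
    le_iInf₂ fun x hx => EReal.coe_le_coe_iff.2 (by linarith [hcon x hx])
  have := add_le_add_left hle (L : EReal)
  rw [← EReal.coe_add, neg_add_cancel, EReal.coe_zero] at this
  exact hL.not_ge this

namespace QAux

variable {m n ν L p : ℝ} {h : ℝ → ℝ}

noncomputable def tailIntegral (p ν L : ℝ) (h : ℝ → ℝ) (x : ℝ) : ℝ :=
  ∫ s in x..ν, s ^ p * (h s + L)

noncomputable def F (m n ν L : ℝ) (h : ℝ → ℝ) (x : ℝ) : ℝ :=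
  m * tailIntegral (-m - 1) ν L h x - n * x ^ (n - m) * tailIntegral (-n - 1) ν L h x

noncomputable def G (n ν L : ℝ) (h : ℝ → ℝ) (x : ℝ) : ℝ :=
  x ^ (-n) * (h x + L) - n * tailIntegral (-n - 1) ν L h x

section Integrability

variable (hMono : MonotoneOn h (Ioi 0))
include hMono

theorem intervalIntegrable_rpow_mul {a b : ℝ} (ha : 0 < a) (hb : 0 < b) :
    IntervalIntegrable (fun s => s ^ p * (h s + L)) volume a b := by
  have hsub : uIcc a b ⊆ Ioi 0 := fun s hs => (lt_min ha hb).trans_le hs.1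
  exact ((hMono.mono hsub).add_const L).intervalIntegrable.continuousOn_mul
    (continuousOn_id.rpow_const fun s hs => Or.inl (hsub hs).ne')

theorem tailIntegral_eq_add {x y : ℝ} (hx : 0 < x) (hy : 0 < y) (hν : 0 < ν) :
    tailIntegral p ν L h x = (∫ s in x..y, s ^ p * (h s + L)) + tailIntegral p ν L h y :=
  (intervalIntegral.integral_add_adjacent_intervals (intervalIntegrable_rpow_mul hMono hx hy)
    (intervalIntegrable_rpow_mul hMono hy hν)).symm

theorem continuousOn_tailIntegral {c : ℝ} (hc : 0 < c) (hν : 0 < ν) :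
    ContinuousOn (tailIntegral p ν L h) (uIcc c ν) :=
  intervalIntegral.continuousOn_primitive_interval_left
    ((intervalIntegrable_iff' (μ := volume)).1 (intervalIntegrable_rpow_mul hMono hc hν))

theorem continuousOn_F {c : ℝ} (hc : 0 < c) (hν : 0 < ν) :
    ContinuousOn (F m n ν L h) (uIcc c ν) := by
  have hpos : uIcc c ν ⊆ Ioi 0 := fun s hs => (lt_min hc hν).trans_le hs.1
  exact (continuousOn_const.mul (continuousOn_tailIntegral hMono hc hν)).sub
    ((continuousOn_const.mul (continuousOn_id.rpow_const fun s hs => Or.inl (hpos hs).ne')).mul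
      (continuousOn_tailIntegral hMono hc hν))

theorem monotoneOn_G (hn : 0 < n) (hν : 0 < ν) : MonotoneOn (G n ν L h) (Ioi 0) := by
  intro x hx y hy hxy
  have hx : 0 < x := hx
  have hpow : (h x + L) * (x ^ (-n) - y ^ (-n)) = n * ∫ s in x..y, s ^ (-n - 1) * (h x + L) := by
    rw [intervalIntegral.integral_mul_const,
      integral_rpow (Or.inr ⟨by linarith, notMem_uIcc_of_lt hx hy⟩), show -n - 1 + 1 = -n by ring]
    field_simp
    ring
  have hint : n * (∫ s in x..y, s ^ (-n - 1) * (h x + L))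
      ≤ n * ∫ s in x..y, s ^ (-n - 1) * (h s + L) := by
    refine mul_le_mul_of_nonneg_left (intervalIntegral.integral_mono_on hxy
      ((intervalIntegral.intervalIntegrable_rpow (Or.inr (notMem_uIcc_of_lt hx hy))).mul_const _)
      (intervalIntegrable_rpow_mul hMono hx hy) fun s hs => ?_) hn.le
    exact mul_le_mul_of_nonneg_left (add_le_add_left (hMono hx (hx.trans_le hs.1) hs.1) L)
      (Real.rpow_nonneg (hx.trans_le hs.1).le _)
  have hend : y ^ (-n) * (h x + L) ≤ y ^ (-n) * (h y + L) :=
    mul_le_mul_of_nonneg_left (add_le_add_left (hMono hx hy hxy) L) (Real.rpow_nonneg hy.le _)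
  simp only [G]
  rw [tailIntegral_eq_add hMono hx hy hν]
  linarith

theorem intervalIntegrable_deriv_F (hn : 0 < n) (hν : 0 < ν) {x y : ℝ} (hx : 0 < x) (hy : 0 < y) :
    IntervalIntegrable (fun s => (n - m) * s ^ (n - m - 1) * G n ν L h s) volume x y := by
  have hsub : uIcc x y ⊆ Ioi 0 := fun s hs => (lt_min hx hy).trans_le hs.1
  exact ((monotoneOn_G hMono hn hν).mono hsub).intervalIntegrable.continuousOn_mul
    (continuousOn_const.mul (continuousOn_id.rpow_const fun s hs => Or.inl (hsub hs).ne'))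

theorem F_neg (hm : m ≤ 0) (hn : 0 < n) {z ν₀ : ℝ} (hz : 0 < z) (hzν : z < ν) (hν₀ν : ν₀ < ν)
    (hnonneg : ∀ s, z ≤ s → 0 ≤ h s + L) (hpos : ∀ s, ν₀ ≤ s → 0 < h s + L) :
    F m n ν L h z < 0 := by
  set z' := max z ν₀
  have hz' : 0 < z' := hz.trans_le (le_max_left _ _)
  have hA : 0 ≤ tailIntegral (-m - 1) ν L h z :=
    intervalIntegral.integral_nonneg hzν.le fun s hs =>
      mul_nonneg (Real.rpow_nonneg (hz.trans_le hs.1).le _) (hnonneg s hs.1)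
  have hB₁ : 0 ≤ ∫ s in z..z', s ^ (-n - 1) * (h s + L) :=
    intervalIntegral.integral_nonneg (le_max_left _ _) fun s hs =>
      mul_nonneg (Real.rpow_nonneg (hz.trans_le hs.1).le _) (hnonneg s hs.1)
  have hB₂ : 0 < tailIntegral (-n - 1) ν L h z' :=
    intervalIntegral.intervalIntegral_pos_of_pos_on
      (intervalIntegrable_rpow_mul hMono hz' (hz.trans hzν))
      (fun s hs => mul_pos (Real.rpow_pos_of_pos (hz'.trans hs.1) _)
        (hpos s ((le_max_right _ _).trans hs.1.le)))
      (max_lt hzν hν₀ν)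
  have hB : 0 < n * z ^ (n - m) * tailIntegral (-n - 1) ν L h z := by
    rw [tailIntegral_eq_add hMono hz hz' (hz.trans hzν)]
    have := Real.rpow_pos_of_pos hz (n - m)
    positivity
  simp only [F]
  linarith [mul_nonpos_of_nonpos_of_nonneg hm hA]

end Integrability

theorem F_self : F m n ν L h ν = 0 := by
  simp [F, tailIntegral]

theorem qAux_eq {σ x : ℝ} (hx : 0 < x) :
    qAux σ m n ν L h x = x ^ (m - 1) / (σ ^ 2 * (n - m)) * F m n ν L h x := by
  have e : x ^ (m - 1) * x ^ (n - m) = x ^ (n - 1) := by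
    rw [← Real.rpow_add hx]; ring_nf
  simp only [qAux, F, tailIntegral]
  linear_combination
    (n * (∫ s in x..ν, s ^ (-n - 1) * (h s + L)) / (σ ^ 2 * (n - m))) * e

theorem qAux_pos {σ x : ℝ} (hσ : σ ≠ 0) (hmn : m < n) (hx : 0 < x) (hF : 0 < F m n ν L h x) :
    0 < qAux σ m n ν L h x := by
  rw [qAux_eq hx]
  exact mul_pos (div_pos (Real.rpow_pos_of_pos hx _) (by have := sub_pos.2 hmn; positivity)) hF

theorem qAux_neg {σ x : ℝ} (hσ : σ ≠ 0) (hmn : m < n) (hx : 0 < x) (hF : F m n ν L h x < 0) :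
    qAux σ m n ν L h x < 0 := by
  rw [qAux_eq hx]
  exact mul_neg_of_pos_of_neg
    (div_pos (Real.rpow_pos_of_pos hx _) (by have := sub_pos.2 hmn; positivity)) hF

section Derivative

variable (hMono : MonotoneOn h (Ioi 0)) (hRC : ∀ x, 0 < x → ContinuousWithinAt h (Ici x) x)
include hMono hRC

theorem hasDerivWithinAt_tailIntegral {s : ℝ} (hs : 0 < s) (hν : 0 < ν) :
    HasDerivWithinAt (tailIntegral p ν L h) (-(s ^ p * (h s + L))) (Ioi s) s := by
  have hmeas : StronglyMeasurableAtFilter (fun s => s ^ p * (h s + L)) (𝓝[>] s) := by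
    refine ⟨Ioc s (s + 1), Ioc_mem_nhdsGT (by linarith), ?_⟩
    have := (intervalIntegrable_rpow_mul (p := p) (L := L) hMono hs (by linarith : 0 < s + 1)).def'
    rw [uIoc_of_le (by linarith)] at this
    exact this.aestronglyMeasurable
  have hcont : ContinuousWithinAt (fun s => s ^ p * (h s + L)) (Ioi s) s :=
    ((Real.continuousAt_rpow_const s p (Or.inl hs.ne')).continuousWithinAt.mul
      ((hRC s hs).add continuousWithinAt_const)).mono Ioi_subset_Ici_self
  exact (intervalIntegral.integral_hasDerivWithinAt_left (s := Ici s)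
    (intervalIntegrable_rpow_mul hMono hs hν) hmeas hcont).mono Ioi_subset_Ici_self

theorem hasDerivWithinAt_F {s : ℝ} (hs : 0 < s) (hν : 0 < ν) :
    HasDerivWithinAt (F m n ν L h) ((n - m) * s ^ (n - m - 1) * G n ν L h s) (Ioi s) s := by
  have hpow := (Real.hasDerivAt_rpow_const (p := n - m) (Or.inl hs.ne')).hasDerivWithinAt
    (s := Ioi s)
  refine (((hasDerivWithinAt_tailIntegral hMono hRC hs hν).const_mul m).sub
    ((hpow.const_mul n).mul (hasDerivWithinAt_tailIntegral hMono hRC hs hν))).congr_deriv ?_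
  have e₁ : s ^ (n - m) * s ^ (-n - 1) = s ^ (-m - 1) := by
    rw [← Real.rpow_add hs]; ring_nf
  have e₂ : s ^ (n - m - 1) * s ^ (-n) = s ^ (-m - 1) := by
    rw [← Real.rpow_add hs]; ring_nf
  simp only [G]
  linear_combination (n * (h s + L)) * e₁ - ((n - m) * (h s + L)) * e₂

theorem integral_deriv_F {x y : ℝ} (hn : 0 < n) (hx : 0 < x) (hxy : x ≤ y) (hyν : y ≤ ν) :
    ∫ s in x..y, (n - m) * s ^ (n - m - 1) * G n ν L h s = F m n ν L h y - F m n ν L h x := by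
  have hν : 0 < ν := (hx.trans_le hxy).trans_le hyν
  exact intervalIntegral.integral_eq_sub_of_hasDeriv_right_of_le hxy
    ((continuousOn_F hMono hx hν).mono ((Icc_subset_Icc_right hyν).trans Icc_subset_uIcc))
    (fun s hs => hasDerivWithinAt_F hMono hRC (hx.trans hs.1) hν)
    (intervalIntegrable_deriv_F hMono hn hν hx (hx.trans_le hxy))

/-- `G` is increasing, so once `F' = (n - m) x ^ (n - m - 1) G` is negative somewhere it is
negative everywhere to the left. -/
theorem F_lt_of_F_lt (hmn : m < n) (hn : 0 < n) {u t z : ℝ} (hu : 0 < u) (hut : u < t)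
    (htz : t ≤ z) (hzν : z ≤ ν) (hFzt : F m n ν L h z < F m n ν L h t) :
    F m n ν L h t < F m n ν L h u := by
  have ht : 0 < t := hu.trans hut
  have hν : 0 < ν := (ht.trans_le htz).trans_le hzν
  have hGmono := monotoneOn_G (L := L) hMono hn hν
  have hGt : G n ν L h t < 0 := by
    by_contra! hGt
    have : 0 ≤ ∫ s in t..z, (n - m) * s ^ (n - m - 1) * G n ν L h s :=
      intervalIntegral.integral_nonneg htz fun s hs =>
        mul_nonneg (mul_nonneg (sub_pos.2 hmn).le (Real.rpow_nonneg (ht.trans_le hs.1).le _))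
          (hGt.trans (hGmono ht (ht.trans_le hs.1) hs.1))
    rw [integral_deriv_F hMono hRC hn ht htz hzν] at this
    linarith
  have : 0 < ∫ s in u..t, -((n - m) * s ^ (n - m - 1) * G n ν L h s) :=
    intervalIntegral.intervalIntegral_pos_of_pos_on
      (intervalIntegrable_deriv_F hMono hn hν hu ht).neg
      (fun s hs => neg_pos.2 (mul_neg_of_pos_of_neg
        (mul_pos (sub_pos.2 hmn) (Real.rpow_pos_of_pos (hu.trans hs.1) _))
        ((hGmono (hu.trans hs.1) ht hs.2.le).trans_lt hGt))) hut
  rw [intervalIntegral.integral_neg, integral_deriv_F hMono hRC hn hu hut.le (htz.trans hzν)]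
    at this
  linarith

theorem exists_F_sign_change (hm : m < 0) (hn : 0 < n) {a ν₀ : ℝ} (ha : 0 < a) (haν : a < ν)
    (hν₀ν : ν₀ < ν) (hnonneg : ∀ s, a ≤ s → 0 ≤ h s + L) (hpos : ∀ s, ν₀ ≤ s → 0 < h s + L) :
    ∃ x₀, (0 ≤ x₀ ∧ x₀ < a) ∧ (∀ x, 0 < x → x < x₀ → 0 < F m n ν L h x) ∧
      (∀ x, x₀ < x → x < ν → F m n ν L h x < 0) := by
  have hν : 0 < ν := ha.trans haν
  have hcont : ContinuousAt (F m n ν L h) a :=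
    (continuousOn_F hMono (half_pos ha) hν).continuousAt
      (by rw [uIcc_of_le (by linarith)]; exact Icc_mem_nhds (by linarith) haν)
  exact exists_sign_change ha haν F_self
    (fun z haz hzν => F_neg hMono hm.le hn (ha.trans_le haz) hzν hν₀ν
      (fun s hs => hnonneg s (haz.trans hs)) hpos)
    (fun u t z hu hut htz hzν => F_lt_of_F_lt hMono hRC (hm.trans hn) hn hu hut htz hzν)
    hcont.continuousWithinAt

end Derivative

end QAux

theorem statement_2_general
    (σ m n : ℝ) (h : ℝ → ℝ)
    (hσ : σ ≠ 0) (hm : m < 0) (hn : 0 < n)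
    (hMono : MonotoneOn h (Set.Ioi 0))
    (hRC : ∀ x : ℝ, 0 < x → ContinuousWithinAt h (Set.Ici x) x)
    (hTop : Tendsto h atTop atTop)
    (ν L : ℝ)
    (hL : hZero h + (L : EReal) < 0)
    (hν : sInf {x : ℝ | 0 < x ∧ 0 < h x + L} < ν) :
    ∃! xhat : ℝ,
      (0 ≤ xhat ∧ xhat < sInf {x : ℝ | 0 < x ∧ 0 ≤ h x + L}) ∧
      (∀ x : ℝ, 0 < x → x < xhat → 0 < qAux σ m n ν L h x) ∧
      (∀ x : ℝ, xhat < x → x < ν → qAux σ m n ν L h x < 0) := by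
  have hg : MonotoneOn (fun x => h x + L) (Ioi 0) := hMono.add_const L
  have hgrc : ∀ x, 0 < x → ContinuousWithinAt (fun x => h x + L) (Ici x) x :=
    fun x hx => (hRC x hx).add continuousWithinAt_const
  obtain ⟨x₀, hx₀, hx₀neg⟩ := exists_add_neg_of_hZero_add_neg hL
  have hS : {x : ℝ | 0 < x ∧ 0 < h x + L}.Nonempty :=
    ((hTop.eventually_gt_atTop (-L)).and (eventually_gt_atTop 0)).exists.imp
      fun x hx => ⟨hx.2, by linarith [hx.1]⟩
  obtain ⟨ν₀, ⟨hν₀, hhν₀⟩, hν₀ν⟩ := exists_lt_of_csInf_lt hS hν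
  have hν₀mem : ν₀ ∈ {x : ℝ | 0 < x ∧ 0 ≤ h x + L} := ⟨hν₀, hhν₀.le⟩
  have hne : {x : ℝ | 0 < x ∧ 0 ≤ h x + L}.Nonempty := ⟨ν₀, hν₀mem⟩
  have ha : 0 < sInf {x : ℝ | 0 < x ∧ 0 ≤ h x + L} :=
    hx₀.trans_le (le_sInf_of_neg hg hx₀ hx₀neg hne)
  have haν : sInf {x : ℝ | 0 < x ∧ 0 ≤ h x + L} < ν :=
    (csInf_le ⟨0, fun x hx => hx.1.le⟩ hν₀mem).trans_lt hν₀ν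
  obtain ⟨xhat, hxhat, hFpos, hFneg⟩ := QAux.exists_F_sign_change hMono hRC hm hn ha haν hν₀ν
    (fun s hs => nonneg_of_sInf_le hg hgrc hne ha hs)
    (fun s hs => hhν₀.trans_le (hg hν₀ (hν₀.trans_le hs) hs))
  have hqpos : ∀ x, 0 < x → x < xhat → 0 < qAux σ m n ν L h x := fun x hx hxx =>
    QAux.qAux_pos hσ (hm.trans hn) hx (hFpos x hx hxx)
  have hqneg : ∀ x, xhat < x → x < ν → qAux σ m n ν L h x < 0 := fun x hxx hxν =>
    QAux.qAux_neg hσ (hm.trans hn) (hxhat.1.trans_lt hxx) (hFneg x hxx hxν)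
  refine ⟨xhat, ⟨hxhat, hqpos, hqneg⟩, fun y ⟨⟨hy, hya⟩, hypos, hyneg⟩ => le_antisymm ?_ ?_⟩
  · exact le_of_pos_of_neg hxhat.1 (hya.trans haν).le hypos hqneg
  · exact le_of_pos_of_neg hy (hxhat.2.trans haν).le hqpos hyneg

theorem statement_2
    (r b σ m n : ℝ) (h : ℝ → ℝ)
    (hr : 0 < r) (hσ : σ ≠ 0) (hm : m < 0) (hn : 0 < n)
    (hmRoot : σ ^ 2 * m ^ 2 + (b - σ ^ 2) * m - r = 0)
    (hnRoot : σ ^ 2 * n ^ 2 + (b - σ ^ 2) * n - r = 0)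
    (hMono : MonotoneOn h (Set.Ioi 0))
    (hRC : ∀ x : ℝ, 0 < x → ContinuousWithinAt h (Set.Ici x) x)
    (hTop : Tendsto h atTop atTop)
    (hIntZero : ∀ x : ℝ, 0 < x →
      IntegrableOn (fun s : ℝ => s ^ (-m - 1) * h s) (Set.Ioc 0 x))
    (hIntTop : ∀ x : ℝ, 0 < x →
      IntegrableOn (fun s : ℝ => s ^ (-n - 1) * h s) (Set.Ioi x))
    (ν L : ℝ)
    (hL : hZero h + (L : EReal) < 0)
    (hν : sInf {x : ℝ | 0 < x ∧ 0 < h x + L} < ν) :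
    ∃! xhat : ℝ,
      (0 ≤ xhat ∧ xhat < sInf {x : ℝ | 0 < x ∧ 0 ≤ h x + L}) ∧
      (∀ x : ℝ, 0 < x → x < xhat → 0 < qAux σ m n ν L h x) ∧
      (∀ x : ℝ, xhat < x → x < ν → qAux σ m n ν L h x < 0) :=
  statement_2_general σ m n h hσ hm hn hMono hRC hTop ν L hL hν
end

section
/- There exists a unique x̂ ∈ (ν̄, ∞] such that q(x) > 0 for all x ∈ (ν, x̂) and, in case x̂ < ∞, q(x) < 0 for all x > x̂. -/
open MeasureTheory Set Filter Topology

set_option linter.unusedVariables false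

/-- The function `q` of Lemma `auxiliar_2'`. -/
noncomputable def qAux' (σ m n ν L : ℝ) (h : ℝ → ℝ) (x : ℝ) : ℝ :=
  (m * x ^ (m - 1) / (σ ^ 2 * (n - m))) * (∫ s in ν..x, s ^ (-m - 1) * (h s + L))
    - (n * x ^ (n - 1) / (σ ^ 2 * (n - m))) * ∫ s in ν..x, s ^ (-n - 1) * (h s + L)

/-! With `g = h + L`, `Aₚ(x) = ∫_ν^x s^(-p-1) g(s) ds` and `E(x) = x^(-n) g(x) + n Aₙ(x)`, the map
`u ↦ m Aₘ(u) - n u^(n-m) Aₙ(u)` vanishes at `ν` and has right derivative `(m - n) u^(n-m-1) E(u)`,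
so `q(x) = -(x^(m-1)/σ²) F(x)` with `F(x) = ∫_ν^x s^(n-m-1) E(s) ds`.
As `E(x) = ν^(-n) g(ν) + ∫_(ν,x] s^(-n) dg(s)`, it increases with `g`, and `E(ν) < 0`. Hence `F < 0`
as long as `E ≤ 0`, in particular up to `ν̄`; and once `F(x₀) ≥ 0`, already `E(x₀) > 0`, so `F > 0`
beyond `x₀`. Thus `q` changes sign at most once, from `+` to `-`, and strictly after `ν̄`. -/

lemma intervalIntegral_neg_of_nonpos_of_eventually_neg {f : ℝ → ℝ} {a b : ℝ} (hab : a < b)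
    (hf : IntervalIntegrable f volume a b) (hle : ∀ s ∈ Ioo a b, f s ≤ 0)
    (hlt : ∀ᶠ s in 𝓝[≥] a, f s < 0) : ∫ s in a..b, f s < 0 := by
  obtain ⟨c, hac, hc⟩ := mem_nhdsGE_iff_exists_Ico_subset.1 hlt
  set d := min b c
  have had : a < d := lt_min hab hac
  have hdb : d ≤ b := min_le_left _ _
  have hf_ad : IntervalIntegrable f volume a d :=
    hf.mono_set (uIcc_subset_uIcc left_mem_uIcc (mem_uIcc_of_le had.le hdb))
  have hf_db : IntervalIntegrable f volume d b :=
    hf.mono_set (uIcc_subset_uIcc (mem_uIcc_of_le had.le hdb) right_mem_uIcc)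
  have h_ad : ∫ s in a..d, f s < 0 := by
    have := intervalIntegral.intervalIntegral_pos_of_pos_on hf_ad.neg
      (fun s hs => neg_pos.2 (hc ⟨hs.1.le, hs.2.trans_le (min_le_right _ _)⟩)) had
    simpa only [Pi.neg_apply, intervalIntegral.integral_neg, neg_pos] using this
  have h_db : ∫ s in d..b, f s ≤ 0 := by
    rw [intervalIntegral.integral_of_le hdb, ← setIntegral_congr_set Ioo_ae_eq_Ioc]
    exact setIntegral_nonpos measurableSet_Ioo fun s hs => hle s ⟨had.trans hs.1, hs.2⟩
  rw [← intervalIntegral.integral_add_adjacent_intervals hf_ad hf_db]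
  linarith

lemma existsUnique_sign_change {f : ℝ → ℝ} {ν a b : ℝ} (hab : a < b) (hνb : ν < b)
    (hpos : ∀ x ∈ Ioo ν b, 0 < f x)
    (hcross : ∀ x₀ x, ν < x₀ → x₀ < x → f x₀ ≤ 0 → f x < 0) :
    ∃! xhat : EReal, (a : EReal) < xhat ∧ (∀ x : ℝ, ν < x → (x : EReal) < xhat → 0 < f x) ∧
      ∀ x : ℝ, xhat < (x : EReal) → f x < 0 := by
  have le_of_neg_of_pos : ∀ y z : EReal, (∀ x : ℝ, y < x → f x < 0) →
      (∀ x : ℝ, ν < x → (x : EReal) < z → 0 < f x) → (ν : EReal) < z → z ≤ y := by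
    intro y z hy hz hνz
    by_contra! hyz
    obtain ⟨w, hw, hwz⟩ := EReal.exists_between_coe_real (max_lt hyz hνz)
    have hνw : ν < w := EReal.coe_lt_coe_iff.1 ((le_max_right _ _).trans_lt hw)
    exact lt_asymm (hz w hνw hwz) (hy w ((le_max_left _ _).trans_lt hw))
  set T : Set ℝ := {x | ν < x ∧ f x ≤ 0}
  set xhat : EReal := sInf ((↑) '' T)
  have hb : (b : EReal) ≤ xhat := le_sInf <| forall_mem_image.2 fun t ht =>
    EReal.coe_le_coe_iff.2 (not_lt.1 fun htb => (hpos t ⟨ht.1, htb⟩).not_ge ht.2)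
  have hxhat_pos : ∀ x : ℝ, ν < x → (x : EReal) < xhat → 0 < f x := fun x hx hxT => by
    by_contra! hfx
    exact hxT.not_ge (sInf_le ⟨x, ⟨hx, hfx⟩, rfl⟩)
  have hxhat_neg : ∀ x : ℝ, xhat < x → f x < 0 := fun x hx => by
    obtain ⟨_, ⟨t, ht, rfl⟩, htx⟩ := sInf_lt_iff.1 hx
    exact hcross t x ht.1 (EReal.coe_lt_coe_iff.1 htx) ht.2
  refine ⟨xhat, ⟨(EReal.coe_lt_coe_iff.2 hab).trans_le hb, hxhat_pos, hxhat_neg⟩, ?_⟩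
  rintro y ⟨-, hy_pos, hy_neg⟩
  have hνb' : (ν : EReal) < b := EReal.coe_lt_coe_iff.2 hνb
  have hby : (b : EReal) ≤ y := le_of_neg_of_pos y b hy_neg
    (fun x hx hxb => hpos x ⟨hx, EReal.coe_lt_coe_iff.1 hxb⟩) hνb'
  exact le_antisymm (le_of_neg_of_pos xhat y hxhat_neg hy_pos (hνb'.trans_le hby))
    (le_of_neg_of_pos y xhat hy_neg hxhat_pos (hνb'.trans_le hb))

section

variable {ν : ℝ}

lemma intervalIntegrable_rpow_mul_of_monotoneOn {φ : ℝ → ℝ} (hν : 0 < ν)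
    (hφ : MonotoneOn φ (Ici ν)) (p : ℝ) {a b : ℝ} (ha : ν ≤ a) (hb : ν ≤ b) :
    IntervalIntegrable (fun s => s ^ p * φ s) volume a b := by
  have hsub : uIcc a b ⊆ Ici ν := fun s hs => (le_min ha hb).trans hs.1
  exact (hφ.mono hsub).intervalIntegrable.continuousOn_mul
    (continuousOn_id.rpow_const fun s hs => Or.inl (hν.trans_le (hsub hs)).ne')

lemma continuousOn_primitive_Ici {f : ℝ → ℝ}
    (hf : ∀ b, ν ≤ b → IntervalIntegrable f volume ν b) :
    ContinuousOn (fun x => ∫ s in ν..x, f s) (Ici ν) := by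
  intro x hx
  have hx1 : ν ≤ x + 1 := by linarith [mem_Ici.1 hx]
  have hcont := intervalIntegral.continuousOn_primitive_interval' (hf (x + 1) hx1) left_mem_uIcc
  rw [uIcc_of_le hx1] at hcont
  refine (hcont x ⟨hx, by linarith⟩).mono_of_mem_nhdsWithin ?_
  rw [← Ici_inter_Iic]
  exact inter_mem_nhdsWithin _ (Iic_mem_nhds (by linarith))

noncomputable def powPrimitive (g : ℝ → ℝ) (ν p x : ℝ) : ℝ := ∫ s in ν..x, s ^ (-p - 1) * g s

noncomputable def stieltjesPow (g : ℝ → ℝ) (ν n x : ℝ) : ℝ :=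
  x ^ (-n) * g x + n * powPrimitive g ν n x

noncomputable def crossingIntegral (g : ℝ → ℝ) (ν m n x : ℝ) : ℝ :=
  ∫ s in ν..x, s ^ (n - m - 1) * stieltjesPow g ν n s

variable {g : ℝ → ℝ}

lemma continuousOn_powPrimitive (hν : 0 < ν) (hg : MonotoneOn g (Ici ν)) (p : ℝ) :
    ContinuousOn (powPrimitive g ν p) (Ici ν) :=
  continuousOn_primitive_Ici fun _ hb =>
    intervalIntegrable_rpow_mul_of_monotoneOn hν hg _ le_rfl hb

lemma hasDerivWithinAt_powPrimitive (hν : 0 < ν) (hg : MonotoneOn g (Ici ν)) (p : ℝ) {x : ℝ}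
    (hx : ν ≤ x) (hrc : ContinuousWithinAt g (Ici x) x) :
    HasDerivWithinAt (powPrimitive g ν p) (x ^ (-p - 1) * g x) (Ici x) x := by
  have hint := intervalIntegrable_rpow_mul_of_monotoneOn hν hg (-p - 1) le_rfl
    (show ν ≤ x + 1 by linarith)
  refine intervalIntegral.integral_hasDerivWithinAt_right (t := Ioi x)
    (intervalIntegrable_rpow_mul_of_monotoneOn hν hg _ le_rfl hx)
    ⟨Ioc x (x + 1), Ioc_mem_nhdsGT (by linarith),
      (hint.1.mono_set (Ioc_subset_Ioc_left hx)).aestronglyMeasurable⟩ ?_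
  exact ((Real.continuousAt_rpow_const _ _ (Or.inl (hν.trans_le hx).ne')).continuousWithinAt.mul
    hrc).mono Ioi_subset_Ici_self

lemma stieltjesPow_monotoneOn (hν : 0 < ν) (hg : MonotoneOn g (Ici ν)) {n : ℝ} (hn : 0 < n) :
    MonotoneOn (stieltjesPow g ν n) (Ici ν) := by
  intro x hx y hy hxy
  have hx0 : 0 < x := hν.trans_le hx
  have hsplit : powPrimitive g ν n y
      = powPrimitive g ν n x + ∫ s in x..y, s ^ (-n - 1) * g s :=
    (intervalIntegral.integral_add_adjacent_intervals
      (intervalIntegrable_rpow_mul_of_monotoneOn hν hg _ le_rfl hx)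
      (intervalIntegrable_rpow_mul_of_monotoneOn hν hg _ hx hy)).symm
  have hpow : n * ∫ s in x..y, s ^ (-n - 1) = x ^ (-n) - y ^ (-n) := by
    have h0 : (0 : ℝ) ∉ uIcc x y := by
      rw [uIcc_of_le hxy]
      exact fun h0 => by linarith [h0.1]
    rw [integral_rpow (Or.inr ⟨by linarith, h0⟩), show -n - 1 + 1 = -n by ring]
    field_simp
    ring
  have hbound : g x * (x ^ (-n) - y ^ (-n)) ≤ n * ∫ s in x..y, s ^ (-n - 1) * g s := by
    rw [← hpow, mul_left_comm, mul_comm (g x), ← intervalIntegral.integral_mul_const]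
    gcongr
    refine intervalIntegral.integral_mono_on hxy
      (intervalIntegrable_rpow_mul_of_monotoneOn (φ := fun _ => g x) hν monotoneOn_const _ hx hy)
      (intervalIntegrable_rpow_mul_of_monotoneOn hν hg _ hx hy) fun s hs => ?_
    exact mul_le_mul_of_nonneg_left (hg hx (hx.trans hs.1) hs.1)
      (Real.rpow_nonneg (hx0.le.trans hs.1) _)
  have hgy : y ^ (-n) * g x ≤ y ^ (-n) * g y :=
    mul_le_mul_of_nonneg_left (hg hx hy hxy) (Real.rpow_nonneg (hx0.le.trans hxy) _)
  simp only [stieltjesPow, hsplit]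
  linarith

lemma stieltjesPow_nonpos {n x : ℝ} (hν : 0 < ν) (hn : 0 ≤ n) (hx : ν ≤ x)
    (hg : ∀ s ∈ Icc ν x, g s ≤ 0) : stieltjesPow g ν n x ≤ 0 := by
  have hA : powPrimitive g ν n x ≤ 0 := by
    rw [powPrimitive, intervalIntegral.integral_of_le hx]
    exact setIntegral_nonpos measurableSet_Ioc fun s hs => mul_nonpos_of_nonneg_of_nonpos
      (Real.rpow_nonneg (hν.trans hs.1).le _) (hg s (Ioc_subset_Icc_self hs))
  exact add_nonpos (mul_nonpos_of_nonneg_of_nonpos (Real.rpow_nonneg (hν.trans_le hx).le _)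
    (hg x ⟨hx, le_rfl⟩)) (mul_nonpos_of_nonneg_of_nonpos hn hA)

lemma eventually_stieltjesPow_neg (hν : 0 < ν) (hg : MonotoneOn g (Ici ν)) (n : ℝ)
    (hrc : ContinuousWithinAt g (Ici ν) ν) (hgν : g ν < 0) :
    ∀ᶠ s in 𝓝[≥] ν, stieltjesPow g ν n s < 0 := by
  have hcont : ContinuousWithinAt (stieltjesPow g ν n) (Ici ν) ν :=
    ((Real.continuousAt_rpow_const _ _ (Or.inl hν.ne')).continuousWithinAt.mul hrc).add
      ((continuousOn_powPrimitive hν hg n ν (mem_Ici.2 le_rfl)).const_mul n)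
  have hneg : stieltjesPow g ν n ν < 0 := by
    simpa [stieltjesPow, powPrimitive] using
      mul_neg_of_pos_of_neg (Real.rpow_pos_of_pos hν (-n)) hgν
  exact hcont.eventually (eventually_lt_nhds hneg)

lemma mul_powPrimitive_sub_eq_crossingIntegral (hν : 0 < ν) (hg : MonotoneOn g (Ici ν))
    (hrc : ∀ s ∈ Ioi ν, ContinuousWithinAt g (Ici s) s) {m n : ℝ} (hn : 0 < n) {x : ℝ}
    (hx : ν ≤ x) :
    m * powPrimitive g ν m x - n * x ^ (n - m) * powPrimitive g ν n x
      = (m - n) * crossingIntegral g ν m n x := by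
  set R : ℝ → ℝ := fun y => m * powPrimitive g ν m y - n * y ^ (n - m) * powPrimitive g ν n y
  have hR : ∫ s in ν..x, (m - n) * (s ^ (n - m - 1) * stieltjesPow g ν n s) = R x - R ν := by
    refine intervalIntegral.integral_eq_sub_of_hasDeriv_right_of_le hx ?_ (fun s hs => ?_)
      ((intervalIntegrable_rpow_mul_of_monotoneOn hν (stieltjesPow_monotoneOn hν hg hn) _
        le_rfl hx).const_mul _)
    · have hA := fun p =>
        (continuousOn_powPrimitive hν hg p).mono (Icc_subset_Ici_self : Icc ν x ⊆ Ici ν)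
      exact ((hA m).const_smul m).sub (((continuousOn_id.rpow_const fun s hs =>
        Or.inl (hν.trans_le hs.1).ne').const_smul n).mul (hA n))
    · have hs0 : 0 < s := hν.trans hs.1
      have hderiv := ((hasDerivWithinAt_powPrimitive hν hg m hs.1.le (hrc s hs.1)).const_mul m).sub
        (((Real.hasDerivAt_rpow_const (p := n - m) (Or.inl hs0.ne')).hasDerivWithinAt.const_mul
          n).mul (hasDerivWithinAt_powPrimitive hν hg n hs.1.le (hrc s hs.1)))
      refine (hderiv.mono Ioi_subset_Ici_self).congr_deriv ?_
      have e₁ : s ^ (n - m) * s ^ (-n - 1) = s ^ (-m - 1) := by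
        rw [← Real.rpow_add hs0]; ring_nf
      have e₂ : s ^ (n - m - 1) * s ^ (-n) = s ^ (-m - 1) := by
        rw [← Real.rpow_add hs0]; ring_nf
      simp only [stieltjesPow]
      linear_combination (-n * g s) * e₁ - (m - n) * g s * e₂
  simpa [R, powPrimitive, intervalIntegral.integral_const_mul, crossingIntegral] using hR.symm

lemma intervalIntegrable_crossingIntegrand (hν : 0 < ν) (hg : MonotoneOn g (Ici ν)) (m : ℝ)
    {n : ℝ} (hn : 0 < n) {a b : ℝ} (ha : ν ≤ a) (hb : ν ≤ b) :
    IntervalIntegrable (fun s => s ^ (n - m - 1) * stieltjesPow g ν n s) volume a b :=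
  intervalIntegrable_rpow_mul_of_monotoneOn hν (stieltjesPow_monotoneOn hν hg hn) _ ha hb

lemma crossingIntegral_neg (hν : 0 < ν) (hg : MonotoneOn g (Ici ν))
    (hrc : ContinuousWithinAt g (Ici ν) ν) (hgν : g ν < 0) (m : ℝ) {n : ℝ} (hn : 0 < n) {x : ℝ}
    (hx : ν < x) (hle : ∀ s ∈ Ioo ν x, stieltjesPow g ν n s ≤ 0) :
    crossingIntegral g ν m n x < 0 := by
  refine intervalIntegral_neg_of_nonpos_of_eventually_neg hx
    (intervalIntegrable_crossingIntegrand hν hg m hn le_rfl hx.le)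
    (fun s hs => mul_nonpos_of_nonneg_of_nonpos (Real.rpow_nonneg (hν.trans hs.1).le _) (hle s hs))
    ?_
  filter_upwards [eventually_stieltjesPow_neg hν hg n hrc hgν, self_mem_nhdsWithin] with s hs hνs
  exact mul_neg_of_pos_of_neg (Real.rpow_pos_of_pos (hν.trans_le hνs) _) hs

lemma crossingIntegral_pos_of_nonneg (hν : 0 < ν) (hg : MonotoneOn g (Ici ν))
    (hrc : ContinuousWithinAt g (Ici ν) ν) (hgν : g ν < 0) (m : ℝ) {n : ℝ} (hn : 0 < n)
    {x₀ x : ℝ} (hx₀ : ν < x₀) (hx : x₀ < x) (h₀ : 0 ≤ crossingIntegral g ν m n x₀) :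
    0 < crossingIntegral g ν m n x := by
  have hmono := stieltjesPow_monotoneOn hν hg hn
  have hE : 0 < stieltjesPow g ν n x₀ := by
    by_contra! hE
    exact (crossingIntegral_neg hν hg hrc hgν m hn hx₀
      fun s hs => (hmono hs.1.le hx₀.le hs.2.le).trans hE).not_ge h₀
  have htail : 0 < ∫ s in x₀..x, s ^ (n - m - 1) * stieltjesPow g ν n s :=
    intervalIntegral.intervalIntegral_pos_of_pos_on
      (intervalIntegrable_crossingIntegrand hν hg m hn hx₀.le (hx₀.trans hx).le)
      (fun s hs => mul_pos (Real.rpow_pos_of_pos (hν.trans (hx₀.trans hs.1)) _)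
        (hE.trans_le (hmono hx₀.le (hx₀.trans hs.1).le hs.1.le))) hx
  rw [crossingIntegral, ← intervalIntegral.integral_add_adjacent_intervals
    (intervalIntegrable_crossingIntegrand hν hg m hn le_rfl hx₀.le)
    (intervalIntegrable_crossingIntegrand hν hg m hn hx₀.le (hx₀.trans hx).le)]
  exact add_pos_of_nonneg_of_pos h₀ htail

lemma continuousOn_crossingIntegral (hν : 0 < ν) (hg : MonotoneOn g (Ici ν)) (m : ℝ) {n : ℝ}
    (hn : 0 < n) : ContinuousOn (crossingIntegral g ν m n) (Ici ν) :=
  continuousOn_primitive_Ici fun _ hb => intervalIntegrable_crossingIntegrand hν hg m hn le_rfl hb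

lemma exists_sInf_lt_forall_crossingIntegral_neg (hν : 0 < ν) (hg : MonotoneOn g (Ici ν))
    (hrc : ContinuousWithinAt g (Ici ν) ν) (hgν : g ν < 0) (m : ℝ) {n : ℝ} (hn : 0 < n) :
    ∃ d, sInf {x | 0 < x ∧ 0 < g x} < d ∧ ν < d ∧
      ∀ x ∈ Ioo ν d, crossingIntegral g ν m n x < 0 := by
  obtain ⟨u, hνu, hu⟩ :=
    mem_nhdsGE_iff_exists_Ico_subset.1 (hrc.eventually (eventually_lt_nhds hgν))
  -- the `max` with `u > ν` matters when the set is empty, where `sInf ∅ = 0 < ν`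
  set c := max (sInf {x | 0 < x ∧ 0 < g x}) u
  have hνc : ν < c := hνu.trans_le (le_max_right _ _)
  have hgc : ∀ s ∈ Ico ν c, g s ≤ 0 := by
    rintro s ⟨hνs, hsc⟩
    rcases lt_or_ge s u with hsu | hus
    · exact (hu ⟨hνs, hsu⟩).le
    · refine not_lt.1 fun hgs => ?_
      have hs_lt : s < sInf {x | 0 < x ∧ 0 < g x} := (lt_max_iff.1 hsc).resolve_right hus.not_gt
      exact hs_lt.not_ge (csInf_le ⟨0, fun x hx => hx.1.le⟩ ⟨hν.trans_le hνs, hgs⟩)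
  have hFc : ∀ x ∈ Ioc ν c, crossingIntegral g ν m n x < 0 := fun x hx =>
    crossingIntegral_neg hν hg hrc hgν m hn hx.1 fun s hs =>
      stieltjesPow_nonpos hν hn.le hs.1.le fun t ht =>
        hgc t ⟨ht.1, ht.2.trans_lt (hs.2.trans_le hx.2)⟩
  obtain ⟨d, hcd, hd⟩ := exists_Ico_subset_of_mem_nhds
    (((continuousOn_crossingIntegral hν hg m hn).continuousAt (Ici_mem_nhds hνc)).eventually
      (eventually_lt_nhds (hFc c ⟨hνc, le_rfl⟩))) ⟨c + 1, lt_add_one c⟩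
  refine ⟨d, (le_max_left _ _).trans_lt hcd, hνc.trans hcd, fun x hx => ?_⟩
  exact (le_or_gt x c).elim (fun hxc => hFc x ⟨hx.1, hxc⟩) fun hcx => hd ⟨hcx.le, hx.2⟩

end

lemma qAux'_eq_neg_mul_crossingIntegral {σ m n ν L : ℝ} {h : ℝ → ℝ} (hσ : σ ≠ 0) (hn : 0 < n)
    (hmn : m ≠ n) (hν : 0 < ν) (hg : MonotoneOn (fun s => h s + L) (Ici ν))
    (hrc : ∀ s ∈ Ioi ν, ContinuousWithinAt (fun s => h s + L) (Ici s) s) {x : ℝ} (hx : ν ≤ x) :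
    qAux' σ m n ν L h x
      = -(x ^ (m - 1) / σ ^ 2) * crossingIntegral (fun s => h s + L) ν m n x := by
  have key := mul_powPrimitive_sub_eq_crossingIntegral hν hg hrc (m := m) hn hx
  have hpow : x ^ (n - 1) = x ^ (m - 1) * x ^ (n - m) := by
    rw [← Real.rpow_add (hν.trans_le hx)]; ring_nf
  have hnm : n - m ≠ 0 := sub_ne_zero.2 hmn.symm
  simp only [powPrimitive] at key
  rw [qAux', hpow]
  field_simp
  linear_combination x ^ (m - 1) * key

theorem statement_3_general
    (σ m n : ℝ) (h : ℝ → ℝ)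
    (hσ : σ ≠ 0) (hm : m < 0) (hn : 0 < n)
    (hMono : MonotoneOn h (Set.Ioi 0))
    (hRC : ∀ x : ℝ, 0 < x → ContinuousWithinAt h (Set.Ici x) x)
    (ν L : ℝ) (hν : 0 < ν)
    (hνL : h ν + L < 0) :
    ∃! xhat : EReal,
      ((sInf {x : ℝ | 0 < x ∧ 0 < h x + L} : ℝ) < xhat) ∧
      (∀ x : ℝ, ν < x → (x : EReal) < xhat → 0 < qAux' σ m n ν L h x) ∧
      (∀ x : ℝ, xhat < (x : EReal) → qAux' σ m n ν L h x < 0) := by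
  set g : ℝ → ℝ := fun s => h s + L
  set F := crossingIntegral g ν m n
  have hg : MonotoneOn g (Ici ν) := fun x hx y hy hxy =>
    add_le_add_left (hMono (hν.trans_le hx) (hν.trans_le hy) hxy) L
  have hrc : ∀ s, 0 < s → ContinuousWithinAt g (Ici s) s := fun s hs =>
    (hRC s hs).add continuousWithinAt_const
  have hq : ∀ x, ν < x → qAux' σ m n ν L h x = -(x ^ (m - 1) / σ ^ 2) * F x := fun x hx =>
    qAux'_eq_neg_mul_crossingIntegral hσ hn (hm.trans hn).ne hν hg
      (fun s hs => hrc s (hν.trans hs)) hx.le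
  have hcoef : ∀ x, ν < x → 0 < x ^ (m - 1) / σ ^ 2 := fun x hx =>
    div_pos (Real.rpow_pos_of_pos (hν.trans hx) _) (by positivity)
  obtain ⟨d, hd, hνd, hFd⟩ :=
    exists_sInf_lt_forall_crossingIntegral_neg hν hg (hrc ν hν) hνL m hn
  refine existsUnique_sign_change hd hνd (fun x hx => ?_) fun x₀ x hx₀ hx hq₀ => ?_
  · rw [hq x hx.1]
    exact mul_pos_of_neg_of_neg (neg_neg_of_pos (hcoef x hx.1)) (hFd x hx)
  · have hF₀ : 0 ≤ F x₀ := by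
      rw [hq x₀ hx₀] at hq₀
      exact nonneg_of_mul_nonpos_right hq₀ (neg_neg_of_pos (hcoef x₀ hx₀))
    rw [hq x (hx₀.trans hx)]
    exact mul_neg_of_neg_of_pos (neg_neg_of_pos (hcoef x (hx₀.trans hx)))
      (crossingIntegral_pos_of_nonneg hν hg (hrc ν hν) hνL m hn hx₀ hx hF₀)

theorem statement_3
    (r b σ m n : ℝ) (h : ℝ → ℝ)
    (hr : 0 < r) (hσ : σ ≠ 0) (hm : m < 0) (hn : 0 < n)
    (hmRoot : σ ^ 2 * m ^ 2 + (b - σ ^ 2) * m - r = 0)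
    (hnRoot : σ ^ 2 * n ^ 2 + (b - σ ^ 2) * n - r = 0)
    (hMono : MonotoneOn h (Set.Ioi 0))
    (hRC : ∀ x : ℝ, 0 < x → ContinuousWithinAt h (Set.Ici x) x)
    (hTop : Tendsto h atTop atTop)
    (hIntZero : ∀ x : ℝ, 0 < x →
      IntegrableOn (fun s : ℝ => s ^ (-m - 1) * h s) (Set.Ioc 0 x))
    (hIntTop : ∀ x : ℝ, 0 < x →
      IntegrableOn (fun s : ℝ => s ^ (-n - 1) * h s) (Set.Ioi x))
    (ν L : ℝ) (hν : 0 < ν)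
    (hνL : h ν + L < 0) :
    ∃! xhat : EReal,
      ((sInf {x : ℝ | 0 < x ∧ 0 < h x + L} : ℝ) < xhat) ∧
      (∀ x : ℝ, ν < x → (x : EReal) < xhat → 0 < qAux' σ m n ν L h x) ∧
      (∀ x : ℝ, xhat < (x : EReal) → qAux' σ m n ν L h x < 0) :=
  statement_3_general σ m n h hσ hm hn hMono hRC ν L hν hνL
end

section
/- The function f : (0,∞) → ℝ defined by f(x) = (1/(σ²(n−m)))[m ∫₀ˣ s^{−m−1} h(s) ds + n x^{n−m} ∫ₓ^∞ s^{−n−1} h(s) ds] (that is, f(x) = x^{1−m} R_h'(x)) is strictly increasing on (0,∞). -/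
open MeasureTheory Set Filter Topology

/-!
Replacing `h` by `h - c` does not change the function, because
`m ∫₀ˣ s^(-m-1) ds + n x^(n-m) ∫ₓ^∞ s^(-n-1) ds = 0`. For `x < y` take `c = h y`: the increment
between `x` and `y` is then an integral over `(x, y]` of the nonpositive kernel
`m s^(-m-1) - n x^(n-m) s^(-n-1)` against the nonpositive `h - h y`, plus
`n (y^(n-m) - x^(n-m)) ∫_y^∞ s^(-n-1) (h s - h y) ds`, which is positive because `h → ∞`.
-/

open Real

/-- `x ^ (1 - m) R_h'(x)`, up to the positive factor `1 / (σ² (n - m))`. -/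
noncomputable def scaledDerivRh (m n : ℝ) (h : ℝ → ℝ) (x : ℝ) : ℝ :=
  m * (∫ s in Ioc 0 x, s ^ (-m - 1) * h s) + n * x ^ (n - m) * ∫ s in Ioi x, s ^ (-n - 1) * h s

lemma integrableOn_Ioc_zero_rpow {r x : ℝ} (hr : -1 < r) (hx : 0 ≤ x) :
    IntegrableOn (fun s : ℝ => s ^ r) (Ioc 0 x) :=
  (intervalIntegrable_iff_integrableOn_Ioc_of_le hx).1 (intervalIntegral.intervalIntegrable_rpow' hr)

lemma integral_Ioc_zero_rpow {r x : ℝ} (hr : -1 < r) (hx : 0 ≤ x) :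
    ∫ s in Ioc 0 x, s ^ r = x ^ (r + 1) / (r + 1) := by
  rw [← intervalIntegral.integral_of_le hx, integral_rpow (Or.inl hr),
    zero_rpow (by linarith), sub_zero]

lemma setIntegral_Ioi_pos_of_eventually_pos {f : ℝ → ℝ} {a : ℝ} (hf : IntegrableOn f (Ioi a))
    (hf_nonneg : ∀ x ∈ Ioi a, 0 ≤ f x) (hf_pos : ∀ᶠ x in atTop, 0 < f x) :
    0 < ∫ x in Ioi a, f x := by
  rw [setIntegral_pos_iff_support_of_nonneg_ae
    ((ae_restrict_iff' measurableSet_Ioi).2 (ae_of_all _ hf_nonneg)) hf]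
  obtain ⟨T, hT⟩ := eventually_atTop.1 hf_pos
  have hsub : Ioi (max a T) ⊆ Function.support f ∩ Ioi a := fun x hx =>
    ⟨(hT x (le_max_right a T |>.trans hx.le)).ne', (le_max_left a T).trans_lt hx⟩
  exact (measure_mono hsub).trans_lt' (by simp [volume_Ioi])

section

variable {m n : ℝ}

lemma scaledDerivRh_const (hm : m < 0) (hn : 0 < n) {x : ℝ} (hx : 0 < x) (c : ℝ) :
    scaledDerivRh m n (fun _ => c) x = 0 := by
  have hpow : x ^ (n - m) * x ^ (-n) = x ^ (-m) := by rw [← rpow_add hx]; ring_nf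
  simp only [scaledDerivRh, integral_mul_const]
  rw [integral_Ioc_zero_rpow (by linarith) hx.le, integral_Ioi_rpow_of_lt (by linarith) hx,
    show -m - 1 + 1 = -m by ring, show -n - 1 + 1 = -n by ring, ← hpow]
  field_simp [hm.ne, hn.ne']
  ring

lemma scaledDerivRh_sub_const (hm : m < 0) (hn : 0 < n) {h : ℝ → ℝ} {x : ℝ} (hx : 0 < x)
    (hA : IntegrableOn (fun s => s ^ (-m - 1) * h s) (Ioc 0 x))
    (hB : IntegrableOn (fun s => s ^ (-n - 1) * h s) (Ioi x)) (c : ℝ) :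
    scaledDerivRh m n (fun s => h s - c) x = scaledDerivRh m n h x := by
  have hconst := scaledDerivRh_const hm hn hx c
  simp only [scaledDerivRh, mul_sub] at hconst ⊢
  rw [integral_sub hA ((integrableOn_Ioc_zero_rpow (by linarith) hx.le).mul_const c),
    integral_sub hB ((integrableOn_Ioi_rpow_of_lt (by linarith) hx).mul_const c)]
  linear_combination -hconst

lemma scaledDerivRh_sub {g : ℝ → ℝ} {x y : ℝ} (hx : 0 ≤ x) (hxy : x ≤ y)
    (hA : IntegrableOn (fun s => s ^ (-m - 1) * g s) (Ioc 0 y))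
    (hB : IntegrableOn (fun s => s ^ (-n - 1) * g s) (Ioi x)) :
    scaledDerivRh m n g y - scaledDerivRh m n g x =
      (∫ s in Ioc x y, (m * s ^ (-m - 1) - n * x ^ (n - m) * s ^ (-n - 1)) * g s)
        + n * (y ^ (n - m) - x ^ (n - m)) * ∫ s in Ioi y, s ^ (-n - 1) * g s := by
  have hA' : IntegrableOn (fun s => s ^ (-m - 1) * g s) (Ioc x y) :=
    hA.mono_set (Ioc_subset_Ioc_left hx)
  have hB' : IntegrableOn (fun s => s ^ (-n - 1) * g s) (Ioc x y) :=
    hB.mono_set Ioc_subset_Ioi_self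
  have splitA : ∫ s in Ioc 0 y, s ^ (-m - 1) * g s
      = (∫ s in Ioc 0 x, s ^ (-m - 1) * g s) + ∫ s in Ioc x y, s ^ (-m - 1) * g s := by
    rw [← Ioc_union_Ioc_eq_Ioc hx hxy, setIntegral_union (Ioc_disjoint_Ioc_of_le le_rfl)
      measurableSet_Ioc (hA.mono_set (Ioc_subset_Ioc_right hxy)) hA']
  have splitB : ∫ s in Ioi x, s ^ (-n - 1) * g s
      = (∫ s in Ioc x y, s ^ (-n - 1) * g s) + ∫ s in Ioi y, s ^ (-n - 1) * g s := by
    rw [← Ioc_union_Ioi_eq_Ioi hxy, setIntegral_union Ioc_disjoint_Ioi_same measurableSet_Ioi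
      hB' (hB.mono_set (Ioi_subset_Ioi hxy))]
  have kernel : ∫ s in Ioc x y, (m * s ^ (-m - 1) - n * x ^ (n - m) * s ^ (-n - 1)) * g s
      = m * (∫ s in Ioc x y, s ^ (-m - 1) * g s)
        - n * x ^ (n - m) * ∫ s in Ioc x y, s ^ (-n - 1) * g s := by
    simp only [sub_mul, mul_assoc]
    rw [integral_sub (hA'.const_mul m) ((hB'.const_mul _).const_mul n), integral_const_mul,
      integral_const_mul, integral_const_mul]
  rw [scaledDerivRh, scaledDerivRh, splitA, splitB, kernel]
  ring

end

theorem strictMonoOn_scaledDerivRh {m n : ℝ} {h : ℝ → ℝ} (hm : m < 0) (hn : 0 < n)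
    (hMono : MonotoneOn h (Ioi 0)) (hTop : Tendsto h atTop atTop)
    (hIntZero : ∀ x : ℝ, 0 < x → IntegrableOn (fun s : ℝ => s ^ (-m - 1) * h s) (Ioc 0 x))
    (hIntTop : ∀ x : ℝ, 0 < x → IntegrableOn (fun s : ℝ => s ^ (-n - 1) * h s) (Ioi x)) :
    StrictMonoOn (scaledDerivRh m n h) (Ioi 0) := by
  rintro x (hx : 0 < x) y (hy : 0 < y) hxy
  have hA : IntegrableOn (fun s => s ^ (-m - 1) * (h s - h y)) (Ioc 0 y) := by
    simp only [mul_sub]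
    exact (hIntZero y hy).sub ((integrableOn_Ioc_zero_rpow (by linarith) hy.le).mul_const _)
  have hB : IntegrableOn (fun s => s ^ (-n - 1) * (h s - h y)) (Ioi x) := by
    simp only [mul_sub]
    exact (hIntTop x hx).sub ((integrableOn_Ioi_rpow_of_lt (by linarith) hx).mul_const _)
  rw [← sub_pos, ← scaledDerivRh_sub_const hm hn hx (hIntZero x hx) (hIntTop x hx) (h y),
    ← scaledDerivRh_sub_const hm hn hy (hIntZero y hy) (hIntTop y hy) (h y),
    scaledDerivRh_sub hx.le hxy.le hA hB]
  refine add_pos_of_nonneg_of_pos (setIntegral_nonneg measurableSet_Ioc fun s hs => ?_) ?_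
  · have hs0 : 0 < s := hx.trans hs.1
    have hkernel : m * s ^ (-m - 1) - n * x ^ (n - m) * s ^ (-n - 1) ≤ 0 := by
      have := mul_neg_of_neg_of_pos hm (rpow_pos_of_pos hs0 (-m - 1))
      have := mul_pos (mul_pos hn (rpow_pos_of_pos hx (n - m))) (rpow_pos_of_pos hs0 (-n - 1))
      linarith
    exact mul_nonneg_of_nonpos_of_nonpos hkernel (sub_nonpos.2 (hMono hs0 hy hs.2))
  · refine mul_pos (mul_pos hn (sub_pos.2 (rpow_lt_rpow hx.le hxy (by linarith)))) ?_
    refine setIntegral_Ioi_pos_of_eventually_pos (hB.mono_set (Ioi_subset_Ioi hxy.le))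
      (fun t ht => mul_nonneg (rpow_nonneg (hy.trans ht).le _)
        (sub_nonneg.2 (hMono hy (hy.trans ht) ht.le))) ?_
    filter_upwards [eventually_gt_atTop 0, hTop.eventually_gt_atTop (h y)] with t ht hht
    exact mul_pos (rpow_pos_of_pos ht _) (sub_pos.2 hht)

theorem statement_4_general
    (σ m n : ℝ) (h : ℝ → ℝ)
    (hσ : σ ≠ 0) (hm : m < 0) (hn : 0 < n)
    (hMono : MonotoneOn h (Set.Ioi 0))
    (hTop : Tendsto h atTop atTop)
    (hIntZero : ∀ x : ℝ, 0 < x →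
      IntegrableOn (fun s : ℝ => s ^ (-m - 1) * h s) (Set.Ioc 0 x))
    (hIntTop : ∀ x : ℝ, 0 < x →
      IntegrableOn (fun s : ℝ => s ^ (-n - 1) * h s) (Set.Ioi x))
    :
    StrictMonoOn (fun x : ℝ =>
      (1 / (σ ^ 2 * (n - m))) *
        (m * (∫ s in Set.Ioc (0 : ℝ) x, s ^ (-m - 1) * h s)
          + n * x ^ (n - m) * ∫ s in Set.Ioi x, s ^ (-n - 1) * h s)) (Set.Ioi 0) := by
  have hc : 0 < 1 / (σ ^ 2 * (n - m)) := one_div_pos.2 (mul_pos (by positivity) (by linarith))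
  exact fun x hx y hy hxy => mul_lt_mul_of_pos_left
    (strictMonoOn_scaledDerivRh hm hn hMono hTop hIntZero hIntTop hx hy hxy) hc

theorem statement_4
    (r b σ m n : ℝ) (h : ℝ → ℝ)
    (hr : 0 < r) (hσ : σ ≠ 0) (hm : m < 0) (hn : 0 < n)
    (hmRoot : σ ^ 2 * m ^ 2 + (b - σ ^ 2) * m - r = 0)
    (hnRoot : σ ^ 2 * n ^ 2 + (b - σ ^ 2) * n - r = 0)
    (hMono : MonotoneOn h (Set.Ioi 0))
    (hRC : ∀ x : ℝ, 0 < x → ContinuousWithinAt h (Set.Ici x) x)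
    (hTop : Tendsto h atTop atTop)
    (hIntZero : ∀ x : ℝ, 0 < x →
      IntegrableOn (fun s : ℝ => s ^ (-m - 1) * h s) (Set.Ioc 0 x))
    (hIntTop : ∀ x : ℝ, 0 < x →
      IntegrableOn (fun s : ℝ => s ^ (-n - 1) * h s) (Set.Ioi x))
    :
    StrictMonoOn (fun x : ℝ =>
      (1 / (σ ^ 2 * (n - m))) *
        (m * (∫ s in Set.Ioc (0 : ℝ) x, s ^ (-m - 1) * h s)
          + n * x ^ (n - m) * ∫ s in Set.Ioi x, s ^ (-n - 1) * h s)) (Set.Ioi 0) :=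
  statement_4_general σ m n h hσ hm hn hMono hTop hIntZero hIntTop
end

section
/- The equation ∫_δ^∞ s^{−n−1}[h(s) + rK] ds = 0 has a solution δ† > 0 if and only if h(0) + rK < 0; in that case the solution is unique, and it satisfies h(x) + rK < 0 for every x ∈ (0, δ†]. -/
/-!
Put `g = h + rK` and `F(δ) = ∫_δ^∞ s^{-n-1} g(s) ds`. Since `g` is increasing and tends to `∞`,
`F(δ) > 0` as soon as `g ≥ 0` on `(δ, ∞)`; hence a zero `δ` of `F` forces `g < 0` on `(0, δ]`,
and then `F(δ') = F(δ) + ∫_{δ'}^{δ} s^{-n-1} g < 0` for every `δ' < δ`, which gives uniqueness.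
Conversely, if `g(x₀) < 0`, then `F(a) ≤ F(x₀) + g(x₀) (a^{-n} - x₀^{-n}) / n → -∞` as `a ↓ 0`,
while `F > 0` far out; `F` is continuous, so it has a zero.
-/

open MeasureTheory Set Filter Topology

set_option linter.unusedVariables false

lemma hZero_add_coe_lt_zero_iff (h : ℝ → ℝ) (c : ℝ) :
    hZero h + (c : EReal) < 0 ↔ ∃ x, 0 < x ∧ h x + c < 0 := by
  rw [← EReal.lt_sub_iff_add_lt (Or.inl (EReal.coe_ne_bot c)) (Or.inl (EReal.coe_ne_top c)),
    zero_sub, ← EReal.coe_neg, hZero]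
  simp only [iInf_lt_iff, mem_Ioi, EReal.coe_lt_coe_iff, exists_prop, lt_neg_iff_add_neg]

section IntegralIoi

variable {f : ℝ → ℝ} {a b : ℝ}

lemma setIntegral_Ioi_pos (hf : IntegrableOn f (Ioi a)) (hf_nonneg : ∀ s ∈ Ioi a, 0 ≤ f s)
    (hf_pos : ∀ᶠ s in atTop, 0 < f s) : 0 < ∫ s in Ioi a, f s := by
  obtain ⟨M, hM⟩ := eventually_atTop.1 hf_pos
  rw [setIntegral_pos_iff_support_of_nonneg_ae
    ((ae_restrict_iff' measurableSet_Ioi).2 (ae_of_all _ hf_nonneg)) hf]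
  have hsub : Ioi (max a M) ⊆ Function.support f ∩ Ioi a := fun s hs =>
    ⟨(hM s (le_of_max_le_right hs.le)).ne', lt_of_le_of_lt (le_max_left a M) hs⟩
  calc (0 : ENNReal) < volume (Ioi (max a M)) := by simp [Real.volume_Ioi]
    _ ≤ volume (Function.support f ∩ Ioi a) := measure_mono hsub

lemma continuousOn_setIntegral_Ioi (hf : IntegrableOn f (Ioi a)) (hab : a ≤ b) :
    ContinuousOn (fun x => ∫ t in Ioi x, f t) (Icc a b) := by
  have hf_Icc : IntegrableOn f (uIcc a b) := by
    rw [uIcc_of_le hab]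
    refine IntegrableOn.mono_set ?_ Icc_subset_Ici_self
    rwa [integrableOn_Ici_iff_integrableOn_Ioi]
  have hprim := intervalIntegral.continuousOn_primitive_interval hf_Icc
  rw [uIcc_of_le hab] at hprim
  refine ((continuousOn_const (c := ∫ t in Ioi a, f t)).sub hprim).congr fun x hx => ?_
  rw [Pi.sub_apply, ← intervalIntegral.integral_Ioi_sub_Ioi hf hx.1, sub_sub_cancel]

end IntegralIoi

noncomputable def weightedTail (n : ℝ) (g : ℝ → ℝ) (δ : ℝ) : ℝ :=
  ∫ s in Ioi δ, s ^ (-n - 1) * g s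

section WeightedTail

variable {n : ℝ} {g : ℝ → ℝ}

lemma integral_rpow_neg_sub_one (hn : 0 < n) {a b : ℝ} (ha : 0 < a) (hab : a ≤ b) :
    ∫ s in a..b, s ^ (-n - 1) = (a ^ (-n) - b ^ (-n)) / n := by
  rw [integral_rpow (Or.inr ⟨by linarith, notMem_uIcc_of_lt ha (ha.trans_le hab)⟩),
    show -n - 1 + 1 = -n by ring, div_neg, ← neg_div, neg_sub]

lemma weightedTail_pos
    (hg_int : ∀ x, 0 < x → IntegrableOn (fun s => s ^ (-n - 1) * g s) (Ioi x))
    (hg_top : Tendsto g atTop atTop) {δ : ℝ} (hδ : 0 < δ) (hg_nonneg : ∀ s ∈ Ioi δ, 0 ≤ g s) :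
    0 < weightedTail n g δ := by
  refine setIntegral_Ioi_pos (hg_int δ hδ)
    (fun s hs => mul_nonneg (Real.rpow_nonneg (hδ.trans hs).le _) (hg_nonneg s hs)) ?_
  filter_upwards [eventually_gt_atTop 0, hg_top.eventually_gt_atTop 0] with s hs hgs
  exact mul_pos (Real.rpow_pos_of_pos hs _) hgs

lemma neg_of_weightedTail_eq_zero (hg_mono : MonotoneOn g (Ioi 0))
    (hg_int : ∀ x, 0 < x → IntegrableOn (fun s => s ^ (-n - 1) * g s) (Ioi x))
    (hg_top : Tendsto g atTop atTop) {δ x : ℝ} (hδ : 0 < δ) (hF : weightedTail n g δ = 0)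
    (hx : 0 < x) (hxδ : x ≤ δ) : g x < 0 := by
  by_contra! hgx
  refine (weightedTail_pos hg_int hg_top hδ fun s hs => ?_).ne' hF
  exact hgx.trans (hg_mono hx (hx.trans_le (hxδ.trans hs.le)) (hxδ.trans hs.le))

lemma weightedTail_neg_of_lt (hg_mono : MonotoneOn g (Ioi 0))
    (hg_int : ∀ x, 0 < x → IntegrableOn (fun s => s ^ (-n - 1) * g s) (Ioi x))
    (hg_top : Tendsto g atTop atTop) {δ δ' : ℝ} (hδ : 0 < δ) (hδδ' : δ < δ')
    (hF : weightedTail n g δ' = 0) : weightedTail n g δ < 0 := by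
  have hint := hg_int δ hδ
  have hmid : 0 < ∫ s in δ..δ', -(s ^ (-n - 1) * g s) := by
    refine intervalIntegral.intervalIntegral_pos_of_pos_on ?_ (fun s hs => ?_) hδδ'
    · exact ((intervalIntegrable_iff_integrableOn_Ioc_of_le hδδ'.le).2
        (hint.mono_set Ioc_subset_Ioi_self)).neg
    · have hs₀ := hδ.trans hs.1
      exact neg_pos.2 (mul_neg_of_pos_of_neg (Real.rpow_pos_of_pos hs₀ _)
        (neg_of_weightedTail_eq_zero hg_mono hg_int hg_top (hδ.trans hδδ') hF hs₀ hs.2.le))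
  have hsplit := intervalIntegral.integral_Ioi_sub_Ioi hint hδδ'.le
  rw [intervalIntegral.integral_neg] at hmid
  unfold weightedTail at hF ⊢
  linarith

lemma eq_of_weightedTail_eq_zero (hg_mono : MonotoneOn g (Ioi 0))
    (hg_int : ∀ x, 0 < x → IntegrableOn (fun s => s ^ (-n - 1) * g s) (Ioi x))
    (hg_top : Tendsto g atTop atTop) {δ δ' : ℝ} (hδ : 0 < δ) (hF : weightedTail n g δ = 0)
    (hδ' : 0 < δ') (hF' : weightedTail n g δ' = 0) : δ = δ' := by
  rcases lt_trichotomy δ δ' with hlt | heq | hgt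
  · exact absurd hF (weightedTail_neg_of_lt hg_mono hg_int hg_top hδ hlt hF').ne
  · exact heq
  · exact absurd hF' (weightedTail_neg_of_lt hg_mono hg_int hg_top hδ' hgt hF).ne

lemma weightedTail_le (hn : 0 < n) (hg_mono : MonotoneOn g (Ioi 0))
    (hg_int : ∀ x, 0 < x → IntegrableOn (fun s => s ^ (-n - 1) * g s) (Ioi x))
    {a x₀ : ℝ} (ha : 0 < a) (hax₀ : a ≤ x₀) :
    weightedTail n g a ≤ weightedTail n g x₀ + g x₀ * ((a ^ (-n) - x₀ ^ (-n)) / n) := by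
  have hx₀ := ha.trans_le hax₀
  have hpow_int : IntervalIntegrable (fun s : ℝ => s ^ (-n - 1)) volume a x₀ :=
    intervalIntegral.intervalIntegrable_rpow (Or.inr (notMem_uIcc_of_lt ha hx₀))
  have hint := hg_int a ha
  have hmid : ∫ s in a..x₀, s ^ (-n - 1) * g s ≤ ∫ s in a..x₀, s ^ (-n - 1) * g x₀ :=
    intervalIntegral.integral_mono_on hax₀
      ((intervalIntegrable_iff_integrableOn_Ioc_of_le hax₀).2
        (hint.mono_set Ioc_subset_Ioi_self))
      (hpow_int.mul_const _) fun s hs => mul_le_mul_of_nonneg_left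
        (hg_mono (ha.trans_le hs.1) hx₀ hs.2) (Real.rpow_nonneg (ha.trans_le hs.1).le _)
  rw [intervalIntegral.integral_mul_const, integral_rpow_neg_sub_one hn ha hax₀,
    ← intervalIntegral.integral_Ioi_sub_Ioi hint hax₀] at hmid
  unfold weightedTail
  linarith

lemma tendsto_weightedTail_nhdsGT_zero (hn : 0 < n) (hg_mono : MonotoneOn g (Ioi 0))
    (hg_int : ∀ x, 0 < x → IntegrableOn (fun s => s ^ (-n - 1) * g s) (Ioi x))
    {x₀ : ℝ} (hx₀ : 0 < x₀) (hgx₀ : g x₀ < 0) :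
    Tendsto (weightedTail n g) (𝓝[>] 0) atBot := by
  have hbound : Tendsto
      (fun a => g x₀ / n * a ^ (-n) + (weightedTail n g x₀ - g x₀ / n * x₀ ^ (-n)))
      (𝓝[>] 0) atBot :=
    tendsto_atBot_add_const_right _ _ <|
      (tendsto_rpow_neg_nhdsGT_zero (neg_lt_zero.2 hn)).const_mul_atTop_of_neg
        (div_neg_of_neg_of_pos hgx₀ hn)
  refine tendsto_atBot_mono' _ ?_ hbound
  filter_upwards [Ioo_mem_nhdsGT hx₀] with a ha
  calc weightedTail n g a ≤ weightedTail n g x₀ + g x₀ * ((a ^ (-n) - x₀ ^ (-n)) / n) :=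
        weightedTail_le hn hg_mono hg_int ha.1 ha.2.le
    _ = _ := by ring

lemma exists_weightedTail_eq_zero (hn : 0 < n) (hg_mono : MonotoneOn g (Ioi 0))
    (hg_int : ∀ x, 0 < x → IntegrableOn (fun s => s ^ (-n - 1) * g s) (Ioi x))
    (hg_top : Tendsto g atTop atTop) (hneg : ∃ x₀, 0 < x₀ ∧ g x₀ < 0) :
    ∃ δ, 0 < δ ∧ weightedTail n g δ = 0 := by
  obtain ⟨x₀, hx₀, hgx₀⟩ := hneg
  obtain ⟨a, haF, ha⟩ :=
    (((tendsto_weightedTail_nhdsGT_zero hn hg_mono hg_int hx₀ hgx₀).eventually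
      (eventually_lt_atBot 0)).and self_mem_nhdsWithin).exists
  obtain ⟨M, hM⟩ := eventually_atTop.1 (hg_top.eventually_ge_atTop 0)
  have hb : 0 < weightedTail n g (max a M) :=
    weightedTail_pos hg_int hg_top (lt_max_of_lt_left ha)
      fun s hs => hM s (le_of_max_le_right (le_of_lt hs))
  obtain ⟨δ, hδ, hFδ⟩ := intermediate_value_Icc (le_max_left a M)
    (continuousOn_setIntegral_Ioi (hg_int a ha) (le_max_left a M)) ⟨haF.le, hb.le⟩
  exact ⟨δ, ha.trans_le hδ.1, hFδ⟩

end WeightedTail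

theorem statement_14_general
    (r n : ℝ) (h : ℝ → ℝ)
    (hn : 0 < n)
    (hMono : MonotoneOn h (Set.Ioi 0))
    (hTop : Tendsto h atTop atTop)
    (hIntTop : ∀ x : ℝ, 0 < x →
      IntegrableOn (fun s : ℝ => s ^ (-n - 1) * h s) (Set.Ioi x))
    (K : ℝ) :
    ((∃ δ : ℝ, 0 < δ ∧ (∫ s in Set.Ioi δ, s ^ (-n - 1) * (h s + r * K)) = 0) ↔
      hZero h + ((r * K : ℝ) : EReal) < 0) ∧
    (∀ δ δ' : ℝ, 0 < δ → (∫ s in Set.Ioi δ, s ^ (-n - 1) * (h s + r * K)) = 0 →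
      0 < δ' → (∫ s in Set.Ioi δ', s ^ (-n - 1) * (h s + r * K)) = 0 → δ = δ') ∧
    (∀ δ : ℝ, 0 < δ → (∫ s in Set.Ioi δ, s ^ (-n - 1) * (h s + r * K)) = 0 →
      ∀ x : ℝ, 0 < x → x ≤ δ → h x + r * K < 0) := by
  have hg_mono : MonotoneOn (fun s => h s + r * K) (Ioi 0) := hMono.add_const _
  have hg_top : Tendsto (fun s => h s + r * K) atTop atTop :=
    tendsto_atTop_add_const_right _ _ hTop
  have hg_int (x : ℝ) (hx : 0 < x) :
      IntegrableOn (fun s => s ^ (-n - 1) * (h s + r * K)) (Ioi x) := by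
    simp only [mul_add]
    exact (hIntTop x hx).add
      ((integrableOn_Ioi_rpow_of_lt (by linarith : -n - 1 < -1) hx).mul_const (r * K))
  rw [hZero_add_coe_lt_zero_iff]
  exact ⟨⟨fun ⟨δ, hδ, hF⟩ =>
      ⟨δ, hδ, neg_of_weightedTail_eq_zero hg_mono hg_int hg_top hδ hF hδ le_rfl⟩,
      exists_weightedTail_eq_zero hn hg_mono hg_int hg_top⟩,
    fun δ δ' hδ hF hδ' hF' => eq_of_weightedTail_eq_zero hg_mono hg_int hg_top hδ hF hδ' hF',
    fun δ hδ hF x hx hxδ => neg_of_weightedTail_eq_zero hg_mono hg_int hg_top hδ hF hx hxδ⟩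

theorem statement_14
    (r b σ m n : ℝ) (h : ℝ → ℝ)
    (hr : 0 < r) (hσ : σ ≠ 0) (hm : m < 0) (hn : 0 < n)
    (hmRoot : σ ^ 2 * m ^ 2 + (b - σ ^ 2) * m - r = 0)
    (hnRoot : σ ^ 2 * n ^ 2 + (b - σ ^ 2) * n - r = 0)
    (hMono : MonotoneOn h (Set.Ioi 0))
    (hRC : ∀ x : ℝ, 0 < x → ContinuousWithinAt h (Set.Ici x) x)
    (hTop : Tendsto h atTop atTop)
    (hIntZero : ∀ x : ℝ, 0 < x →
      IntegrableOn (fun s : ℝ => s ^ (-m - 1) * h s) (Set.Ioc 0 x))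
    (hIntTop : ∀ x : ℝ, 0 < x →
      IntegrableOn (fun s : ℝ => s ^ (-n - 1) * h s) (Set.Ioi x))
    (K : ℝ) :
    ((∃ δ : ℝ, 0 < δ ∧ (∫ s in Set.Ioi δ, s ^ (-n - 1) * (h s + r * K)) = 0) ↔
      hZero h + ((r * K : ℝ) : EReal) < 0) ∧
    (∀ δ δ' : ℝ, 0 < δ → (∫ s in Set.Ioi δ, s ^ (-n - 1) * (h s + r * K)) = 0 →
      0 < δ' → (∫ s in Set.Ioi δ', s ^ (-n - 1) * (h s + r * K)) = 0 → δ = δ') ∧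
    (∀ δ : ℝ, 0 < δ → (∫ s in Set.Ioi δ, s ^ (-n - 1) * (h s + r * K)) = 0 →
      ∀ x : ℝ, 0 < x → x ≤ δ → h x + r * K < 0) :=
  statement_14_general r n h hn hMono hTop hIntTop K
end

section
/- Suppose h(0) + rK < 0 and K + K₁ > 0, and let δ† > 0 be the unique solution of ∫_δ^∞ s^{−n−1}[h(s) + rK] ds = 0. Then the equation m∫_{δ†}^α s^{−m−1}[h(s) − rK₁] ds + r(K₁ + K)δ†^{−m} = 0 has a unique solution α > δ†, and this solution satisfies α > inf{x > 0 : h(x) − rK₁ > 0}; in particular h(x) − rK₁ > 0 for every x ≥ α. -/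
open MeasureTheory Set Filter Topology

set_option linter.unusedVariables false

theorem statement_15
    (r b σ m n : ℝ) (h : ℝ → ℝ)
    (hr : 0 < r) (hσ : σ ≠ 0) (hm : m < 0) (hn : 0 < n)
    (hmRoot : σ ^ 2 * m ^ 2 + (b - σ ^ 2) * m - r = 0)
    (hnRoot : σ ^ 2 * n ^ 2 + (b - σ ^ 2) * n - r = 0)
    (hMono : MonotoneOn h (Set.Ioi 0))
    (hRC : ∀ x : ℝ, 0 < x → ContinuousWithinAt h (Set.Ici x) x)
    (hTop : Tendsto h atTop atTop)
    (hIntZero : ∀ x : ℝ, 0 < x →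
      IntegrableOn (fun s : ℝ => s ^ (-m - 1) * h s) (Set.Ioc 0 x))
    (hIntTop : ∀ x : ℝ, 0 < x →
      IntegrableOn (fun s : ℝ => s ^ (-n - 1) * h s) (Set.Ioi x))
    (K₁ K : ℝ) (hK₁ : 0 < K₁)
    (hcond : hZero h + ((r * K : ℝ) : EReal) < 0) (hKK₁ : 0 < K + K₁)
    (δdag : ℝ) (hδdag : 0 < δdag)
    (hδdagEq : (∫ s in Set.Ioi δdag, s ^ (-n - 1) * (h s + r * K)) = 0) :
    (∃! α : ℝ, δdag < α ∧
      m * (∫ s in δdag..α, s ^ (-m - 1) * (h s - r * K₁))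
        + r * (K₁ + K) * δdag ^ (-m) = 0) ∧
    ∀ α : ℝ, δdag < α →
      m * (∫ s in δdag..α, s ^ (-m - 1) * (h s - r * K₁))
        + r * (K₁ + K) * δdag ^ (-m) = 0 →
      sInf {x : ℝ | 0 < x ∧ 0 < h x - r * K₁} < α ∧
      ∀ x : ℝ, α ≤ x → 0 < h x - r * K₁ := by
  classical
  set f : ℝ → ℝ := fun s => s ^ (-m - 1) * (h s - r * K₁) with hf_def
  set G : ℝ → ℝ := fun α =>
    m * (∫ s in δdag..α, f s) + r * (K₁ + K) * δdag ^ (-m) with hG_def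
  have hm1 : (-1 : ℝ) < -m - 1 := by linarith
  have hC : 0 < r * (K₁ + K) * δdag ^ (-m) := by
    have := Real.rpow_pos_of_pos hδdag (-m)
    have h1 : 0 < r * (K₁ + K) := by nlinarith
    positivity
  -- local integrability of f
  have hfInt : ∀ x : ℝ, 0 < x → IntegrableOn f (Set.Ioc 0 x) := by
    intro x hx
    have h1 := hIntZero x hx
    have h2 : IntegrableOn (fun s : ℝ => s ^ (-m - 1)) (Set.Ioc 0 x) := by
      have := intervalIntegral.intervalIntegrable_rpow' (a := 0) (b := x) hm1
      rwa [intervalIntegrable_iff_integrableOn_Ioc_of_le hx.le] at this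
    have : IntegrableOn (fun s : ℝ => s ^ (-m - 1) * h s
        - s ^ (-m - 1) * (r * K₁)) (Set.Ioc 0 x) := h1.sub (h2.mul_const _)
    refine this.congr_fun (fun s hs => ?_) measurableSet_Ioc
    simp only [hf_def]; ring
  have hfII : ∀ a c : ℝ, 0 < a → 0 < c → IntervalIntegrable f volume a c := by
    intro a c ha hc
    rw [intervalIntegrable_iff]
    refine (hfInt (max a c) (lt_max_of_lt_left ha)).mono_set ?_
    rw [Set.uIoc]
    exact Set.Ioc_subset_Ioc (lt_min ha hc).le le_rfl
  -- h δdag + r K ≤ 0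
  have hhδ : h δdag + r * K ≤ 0 := by
    by_contra hcon
    push_neg at hcon
    have hint : IntegrableOn (fun s : ℝ => s ^ (-n - 1) * (h s + r * K))
        (Set.Ioi δdag) := by
      have h1 := hIntTop δdag hδdag
      have h2 : IntegrableOn (fun s : ℝ => s ^ (-n - 1)) (Set.Ioi δdag) :=
        integrableOn_Ioi_rpow_of_lt (by linarith) hδdag
      refine (h1.add (h2.mul_const (r * K))).congr (ae_of_all _ fun s => ?_)
      simp only [Pi.add_apply]; ring
    have hposint : 0 < ∫ s in Set.Ioi δdag, s ^ (-n - 1) * (h s + r * K) := by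
      have hposon : ∀ s ∈ Set.Ioi δdag, 0 < s ^ (-n - 1) * (h s + r * K) := by
        intro s hs
        have hs0 : 0 < s := lt_trans hδdag hs
        have h1 : 0 < s ^ (-n - 1) := Real.rpow_pos_of_pos hs0 _
        have h2 : h δdag ≤ h s := hMono hδdag (by exact hs0) (le_of_lt hs)
        nlinarith
      rw [setIntegral_pos_iff_support_of_nonneg_ae]
      · have hsub : Set.Ioi δdag ⊆ Function.support
            (fun s : ℝ => s ^ (-n - 1) * (h s + r * K)) :=
          fun s hs => ne_of_gt (hposon s hs)
        rw [Set.inter_eq_right.2 hsub]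
        simp [Real.volume_Ioi]
      · filter_upwards [ae_restrict_mem measurableSet_Ioi] with s hs
        exact (hposon s hs).le
      · exact hint
    rw [hδdagEq] at hposint; exact lt_irrefl _ hposint
  have hδlt : h δdag - r * K₁ < 0 := by nlinarith
  -- the set S and its infimum
  set S : Set ℝ := {x : ℝ | 0 < x ∧ 0 < h x - r * K₁} with hS_def
  have hSne : S.Nonempty := by
    obtain ⟨x, hx1, hx2⟩ :=
      ((hTop.eventually_ge_atTop (r * K₁ + 1)).and (eventually_gt_atTop 0)).exists
    exact ⟨x, hx2, by linarith⟩
  have hSbdd : BddBelow S := ⟨0, fun x hx => hx.1.le⟩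
  have hSδ : ∀ x ∈ S, δdag ≤ x := by
    intro x hx
    by_contra hcon
    push_neg at hcon
    have := hMono hx.1 hδdag hcon.le
    have := hx.2
    nlinarith
  have hxstar : δdag ≤ sInf S := le_csInf hSne hSδ
  have hxstar0 : 0 < sInf S := lt_of_lt_of_le hδdag hxstar
  -- h s > r K₁ strictly past sInf S
  have hgt : ∀ s : ℝ, sInf S < s → 0 < h s - r * K₁ := by
    intro s hs
    obtain ⟨y, hyS, hys⟩ := (csInf_lt_iff hSbdd hSne).1 hs
    have := hMono hyS.1 (lt_trans hyS.1 hys) hys.le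
    have := hyS.2
    linarith
  -- f ≤ 0 below sInf S
  have hle : ∀ s : ℝ, 0 < s → s < sInf S → f s ≤ 0 := by
    intro s hs0 hs
    have hns : s ∉ S := fun hmem => absurd (csInf_le hSbdd hmem) (not_le.2 hs)
    have h2 : h s - r * K₁ ≤ 0 := by
      by_contra hcon; push_neg at hcon; exact hns ⟨hs0, hcon⟩
    have h1 : 0 ≤ s ^ (-m - 1) := (Real.rpow_pos_of_pos hs0 _).le
    exact mul_nonpos_of_nonneg_of_nonpos h1 h2
  -- G is positive on [δdag, sInf S]
  have hGpos : ∀ α : ℝ, δdag ≤ α → α ≤ sInf S → 0 < G α := by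
    intro α h1 h2
    have key : (∫ s in δdag..α, f s) ≤ 0 := by
      rw [intervalIntegral.integral_of_le h1, MeasureTheory.integral_Ioc_eq_integral_Ioo]
      refine setIntegral_nonpos measurableSet_Ioo (fun s hs => ?_)
      exact hle s (lt_trans hδdag hs.1) (lt_of_lt_of_le hs.2 h2)
    have : 0 ≤ m * (∫ s in δdag..α, f s) := by nlinarith [key]
    simp only [hG_def]; linarith
  -- additivity of G
  have hGadd : ∀ a c : ℝ, 0 < a → a < c →
      G c = G a + m * (∫ s in a..c, f s) := by
    intro a c ha hac
    have h1 := hfII δdag a hδdag ha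
    have h2 := hfII a c ha (lt_trans ha hac)
    simp only [hG_def]
    rw [← intervalIntegral.integral_add_adjacent_intervals h1 h2]
    ring
  -- G strictly decreasing past sInf S
  have hdec : ∀ a c : ℝ, sInf S ≤ a → a < c → G c < G a := by
    intro a c ha hac
    have ha0 : 0 < a := lt_of_lt_of_le hxstar0 ha
    have hint : 0 < ∫ s in a..c, f s := by
      refine intervalIntegral.intervalIntegral_pos_of_pos_on
        (hfII a c ha0 (lt_trans ha0 hac)) (fun s hs => ?_) hac
      have hs0 : 0 < s := lt_trans ha0 hs.1
      exact mul_pos (Real.rpow_pos_of_pos hs0 _)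
        (hgt s (lt_of_le_of_lt ha hs.1))
    rw [hGadd a c ha0 hac]
    nlinarith
  -- a point past sInf S
  obtain ⟨a, haxs⟩ : ∃ a : ℝ, sInf S < a := ⟨sInf S + 1, by linarith⟩
  have ha0 : 0 < a := lt_trans hxstar0 haxs
  have hδa : δdag < a := lt_of_le_of_lt hxstar haxs
  obtain ⟨c, hc_def⟩ : ∃ c : ℝ, c = h a - r * K₁ := ⟨_, rfl⟩
  have hc : 0 < c := hc_def ▸ hgt a haxs
  -- growth bound: G α ≤ G a - c * (α^(-m) - a^(-m)) for α ≥ a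
  have hbound : ∀ α : ℝ, a ≤ α → G α ≤ G a - c * (α ^ (-m) - a ^ (-m)) := by
    intro α hα
    rcases eq_or_lt_of_le hα with rfl | hα'
    · simp
    have hα0 : 0 < α := lt_trans ha0 hα'
    have hint1 : IntervalIntegrable (fun s : ℝ => c * s ^ (-m - 1)) volume a α := by
      exact (intervalIntegral.intervalIntegrable_rpow' hm1).const_mul c
    have hmono : (∫ s in a..α, c * s ^ (-m - 1)) ≤ ∫ s in a..α, f s := by
      refine intervalIntegral.integral_mono_on hα hint1 (hfII a α ha0 hα0)
        (fun s hs => ?_)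
      have hs0 : 0 < s := lt_of_lt_of_le ha0 hs.1
      have h2 : h a ≤ h s := hMono ha0 hs0 hs.1
      have h1 : 0 < s ^ (-m - 1) := Real.rpow_pos_of_pos hs0 _
      simp only [hf_def]
      rw [hc_def]
      nlinarith
    have hval : (∫ s in a..α, c * s ^ (-m - 1))
        = c * ((α ^ (-m) - a ^ (-m)) / (-m)) := by
      rw [intervalIntegral.integral_const_mul, integral_rpow (Or.inl hm1)]
      norm_num
    have hmul : m * (∫ s in a..α, f s) ≤ m * (∫ s in a..α, c * s ^ (-m - 1)) :=
      mul_le_mul_of_nonpos_left hmono hm.le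
    have hm0 : m ≠ 0 := ne_of_lt hm
    have hmm : m / (-m) = -1 := by
      rw [div_neg, div_self hm0]
    have heq : m * (c * ((α ^ (-m) - a ^ (-m)) / (-m)))
        = -(c * (α ^ (-m) - a ^ (-m))) := by
      calc m * (c * ((α ^ (-m) - a ^ (-m)) / (-m)))
          = c * (α ^ (-m) - a ^ (-m)) * (m / (-m)) := by ring
        _ = -(c * (α ^ (-m) - a ^ (-m))) := by rw [hmm]; ring
    rw [hGadd a α ha0 hα']
    rw [hval, heq] at hmul
    linarith
  -- find M with G M < 0
  obtain ⟨M, hM1, hM2⟩ : ∃ M : ℝ, a ≤ M ∧ G M < 0 := by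
    have htend : Tendsto (fun x : ℝ => x ^ (-m)) atTop atTop :=
      tendsto_rpow_atTop (by linarith)
    obtain ⟨M, hMa, hMb⟩ :=
      ((htend.eventually_ge_atTop (a ^ (-m) + (G a + 1) / c)).and
        (eventually_ge_atTop a)).exists
    refine ⟨M, hMb, ?_⟩
    have h1 := hbound M hMb
    have h2 : G a + 1 ≤ c * (M ^ (-m) - a ^ (-m)) := by
      have h3 : (G a + 1) / c ≤ M ^ (-m) - a ^ (-m) := by linarith
      calc G a + 1 = (G a + 1) / c * c := (div_mul_cancel₀ _ (ne_of_gt hc)).symm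
        _ = c * ((G a + 1) / c) := by ring
        _ ≤ c * (M ^ (-m) - a ^ (-m)) := by
            exact mul_le_mul_of_nonneg_left h3 hc.le
    linarith
  have hδM : δdag ≤ M := le_of_lt (lt_of_lt_of_le hδa hM1)
  -- continuity of G on [δdag, M]
  have hGcont : ContinuousOn G (Set.Icc δdag M) := by
    have hint : IntegrableOn f (Set.uIcc δdag M) := by
      rw [Set.uIcc_of_le hδM]
      refine (hfInt M (lt_of_lt_of_le hδdag hδM)).mono_set ?_
      exact fun s hs => ⟨lt_of_lt_of_le hδdag hs.1, hs.2⟩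
    have h1 := intervalIntegral.continuousOn_primitive_interval hint
    rw [Set.uIcc_of_le hδM] at h1
    exact (continuousOn_const.mul h1).add continuousOn_const
  have hGδ : 0 < G δdag := by
    simp only [hG_def, intervalIntegral.integral_same, mul_zero, zero_add]
    exact hC
  -- existence of a root
  obtain ⟨α, hαmem, hαroot⟩ : ∃ α ∈ Set.Icc δdag M, G α = 0 := by
    have := intermediate_value_Icc' hδM hGcont
    have h0 : (0 : ℝ) ∈ Set.Icc (G M) (G δdag) := ⟨hM2.le, hGδ.le⟩
    obtain ⟨α, hα1, hα2⟩ := this h0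
    exact ⟨α, hα1, hα2⟩
  -- any root is past sInf S
  have hrootgt : ∀ β : ℝ, δdag ≤ β → G β = 0 → sInf S < β := by
    intro β hβ hβ0
    by_contra hcon
    push_neg at hcon
    exact absurd hβ0 (ne_of_gt (hGpos β hβ hcon))
  have hαxs : sInf S < α := hrootgt α hαmem.1 hαroot
  have hαδ : δdag < α := lt_of_le_of_lt hxstar hαxs
  constructor
  · refine ⟨α, ⟨hαδ, hαroot⟩, ?_⟩
    rintro β ⟨hβδ, hβroot⟩
    have hβxs : sInf S < β := hrootgt β hβδ.le hβroot
    rcases lt_trichotomy α β with hlt | heq | hlt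
    · exact absurd (hβroot.trans hαroot.symm) (ne_of_lt (hdec α β hαxs.le hlt))
    · exact heq.symm
    · exact absurd (hαroot.trans hβroot.symm) (ne_of_lt (hdec β α hβxs.le hlt))
  · intro β hβδ hβroot
    have hβxs : sInf S < β := hrootgt β hβδ.le hβroot
    exact ⟨hβxs, fun x hx => hgt x (lt_of_lt_of_le hβxs hx)⟩
end

section
/- Suppose K < K₀ and let β > 0 be such that h(x) + rK₀ < 0 for all x ∈ (0, β]. Then for every γ ∈ (0, β] there exists a unique δ ∈ (0, γ) such that m∫_δ^γ s^{−m−1}[h(s) + rK₀] ds + r(K − K₀)δ^{−m} = 0; moreover, the map ℓ : (0, β] → (0, β) assigning to each γ this unique δ satisfies ℓ(γ) < γ for all γ and is strictly increasing. -/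
open MeasureTheory Set Filter Topology

set_option linter.unusedVariables false

theorem statement_16
    (r b σ m n : ℝ) (h : ℝ → ℝ)
    (hr : 0 < r) (hσ : σ ≠ 0) (hm : m < 0) (hn : 0 < n)
    (hmRoot : σ ^ 2 * m ^ 2 + (b - σ ^ 2) * m - r = 0)
    (hnRoot : σ ^ 2 * n ^ 2 + (b - σ ^ 2) * n - r = 0)
    (hMono : MonotoneOn h (Set.Ioi 0))
    (hRC : ∀ x : ℝ, 0 < x → ContinuousWithinAt h (Set.Ici x) x)
    (hTop : Tendsto h atTop atTop)
    (hIntZero : ∀ x : ℝ, 0 < x →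
      IntegrableOn (fun s : ℝ => s ^ (-m - 1) * h s) (Set.Ioc 0 x))
    (hIntTop : ∀ x : ℝ, 0 < x →
      IntegrableOn (fun s : ℝ => s ^ (-n - 1) * h s) (Set.Ioi x))
    (K₀ K : ℝ) (hK₀ : 0 < K₀) (hKK₀ : K < K₀)
    (β : ℝ) (hβ : 0 < β) (hβh : ∀ x : ℝ, 0 < x → x ≤ β → h x + r * K₀ < 0) :
    (∀ γ : ℝ, 0 < γ → γ ≤ β → ∃! δ : ℝ, (0 < δ ∧ δ < γ) ∧
      m * (∫ s in δ..γ, s ^ (-m - 1) * (h s + r * K₀)) + r * (K - K₀) * δ ^ (-m) = 0) ∧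
    ∀ ell : ℝ → ℝ,
      (∀ γ : ℝ, 0 < γ → γ ≤ β → (0 < ell γ ∧ ell γ < γ) ∧
        m * (∫ s in ell γ..γ, s ^ (-m - 1) * (h s + r * K₀))
          + r * (K - K₀) * ell γ ^ (-m) = 0) →
      StrictMonoOn ell (Set.Ioc 0 β) := by
  have hm' : (0:ℝ) < -m := by linarith
  have hrK : r * (K - K₀) < 0 := mul_neg_of_pos_of_neg hr (by linarith)
  set g : ℝ → ℝ := fun s => s ^ (-m - 1) * (h s + r * K₀) with hgdef
  -- integrability near 0
  have hgInt : ∀ x : ℝ, 0 < x → IntegrableOn g (Set.Ioc 0 x) := by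
    intro x hx
    have h1 : IntegrableOn (fun s : ℝ => s ^ (-m - 1)) (Set.Ioc 0 x) := by
      have := intervalIntegral.intervalIntegrable_rpow' (a := 0) (b := x) (r := -m - 1) (by linarith)
      rwa [intervalIntegrable_iff_integrableOn_Ioc_of_le hx.le] at this
    have h2 : IntegrableOn (fun s : ℝ => s ^ (-m - 1) * h s + s ^ (-m - 1) * (r * K₀))
        (Set.Ioc 0 x) := (hIntZero x hx).add (h1.mul_const _)
    exact h2.congr_fun (fun s _ => by simp only [hgdef]; ring) measurableSet_Ioc
  have hii : ∀ a b : ℝ, 0 < a → a ≤ b → IntervalIntegrable g volume a b := by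
    intro a b ha hab
    rw [intervalIntegrable_iff_integrableOn_Ioc_of_le hab]
    exact (hgInt b (lt_of_lt_of_le ha hab)).mono_set (Set.Ioc_subset_Ioc ha.le le_rfl)
  have hgneg : ∀ s : ℝ, 0 < s → s ≤ β → g s < 0 := fun s hs hsβ =>
    mul_neg_of_pos_of_neg (Real.rpow_pos_of_pos hs _) (hβh s hs hsβ)
  -- strict negativity of the integral of g over subintervals of (0, β]
  have intNeg : ∀ a c : ℝ, 0 < a → a < c → c ≤ β → (∫ s in a..c, g s) < 0 := by
    intro a c ha hac hcβ
    rw [intervalIntegral.integral_of_le hac.le]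
    have hint : IntegrableOn g (Set.Ioc a c) :=
      (hgInt c (ha.trans hac)).mono_set (Set.Ioc_subset_Ioc ha.le le_rfl)
    have hpos : 0 < ∫ s in Set.Ioc a c, -g s := by
      rw [MeasureTheory.setIntegral_pos_iff_support_of_nonneg_ae]
      · have hsub : Set.Ioc a c ⊆ Function.support fun s => -g s := fun s hs =>
          (neg_pos.mpr (hgneg s (ha.trans hs.1) (hs.2.trans hcβ))).ne'
        rw [Set.inter_eq_right.mpr hsub, Real.volume_Ioc]
        exact ENNReal.ofReal_pos.mpr (by linarith)
      · exact ae_restrict_of_forall_mem measurableSet_Ioc fun s hs =>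
          (neg_pos.mpr (hgneg s (ha.trans hs.1) (hs.2.trans hcβ))).le
      · exact hint.neg
    rw [MeasureTheory.integral_neg] at hpos
    linarith
  -- splitting of integrals
  have split : ∀ a c d : ℝ, 0 < a → a ≤ c → c ≤ d →
      (∫ s in a..d, g s) = (∫ s in a..c, g s) + ∫ s in c..d, g s := fun a c d ha hac hcd =>
    (intervalIntegral.integral_add_adjacent_intervals (hii a c ha hac)
      (hii c d (ha.trans_le hac) hcd)).symm
  -- strict antitonicity of φ_γ
  have anti : ∀ γ δ₁ δ₂ : ℝ, γ ≤ β → 0 < δ₁ → δ₁ < δ₂ → δ₂ ≤ γ →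
      m * (∫ s in δ₂..γ, g s) + r * (K - K₀) * δ₂ ^ (-m)
        < m * (∫ s in δ₁..γ, g s) + r * (K - K₀) * δ₁ ^ (-m) := by
    intro γ δ₁ δ₂ hγβ h1 h12 h2γ
    have hsplit := split δ₁ δ₂ γ h1 h12.le h2γ
    have hI : 0 < m * ∫ s in δ₁..δ₂, g s :=
      mul_pos_of_neg_of_neg hm (intNeg δ₁ δ₂ h1 h12 (h2γ.trans hγβ))
    have hpow : δ₁ ^ (-m) < δ₂ ^ (-m) := Real.rpow_lt_rpow h1.le h12 hm'
    have h2' : 0 < r * (K - K₀) * δ₁ ^ (-m) - r * (K - K₀) * δ₂ ^ (-m) := by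
      nlinarith
    rw [hsplit]
    linarith
  constructor
  · -- existence and uniqueness
    intro γ hγ hγβ
    have hγ2 : 0 < γ / 2 := half_pos hγ
    have hγ2γ : γ / 2 < γ := by linarith
    have hc : 0 < m * ∫ s in (γ/2)..γ, g s :=
      mul_pos_of_neg_of_neg hm (intNeg _ _ hγ2 hγ2γ hγβ)
    -- choose δ₀ small
    have tend : Tendsto (fun t : ℝ => r * (K₀ - K) * t ^ (-m)) (𝓝[>] (0:ℝ)) (𝓝 0) := by
      have h0 : Tendsto (fun x : ℝ => x ^ (-m)) (𝓝[>] (0:ℝ)) (𝓝 ((0:ℝ) ^ (-m))) :=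
        (Real.continuousAt_rpow_const 0 (-m) (Or.inr hm'.le)).tendsto.mono_left
          nhdsWithin_le_nhds
      have h1 := h0.const_mul (r * (K₀ - K))
      simpa [Real.zero_rpow hm'.ne'] using h1
    have ev1 : ∀ᶠ t in 𝓝[>] (0:ℝ), r * (K₀ - K) * t ^ (-m) < m * ∫ s in (γ/2)..γ, g s :=
      tend.eventually_lt_const hc
    have ev2 : ∀ᶠ t in 𝓝[>] (0:ℝ), t < γ / 2 := by
      filter_upwards [Ioo_mem_nhdsGT hγ2] with t ht using ht.2
    have ev3 : ∀ᶠ t in 𝓝[>] (0:ℝ), 0 < t := by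
      filter_upwards [self_mem_nhdsWithin] with t ht using ht
    obtain ⟨δ₀, hδ₀c, hδ₀γ2, hδ₀pos⟩ := (ev1.and (ev2.and ev3)).exists
    obtain ⟨hδ₀c, hδ₀γ2, hδ₀pos⟩ : _ ∧ _ ∧ _ := ⟨hδ₀c, hδ₀γ2, hδ₀pos⟩
    have hδ₀γ : δ₀ < γ := hδ₀γ2.trans hγ2γ
    -- value at γ
    have hφγ : m * (∫ s in γ..γ, g s) + r * (K - K₀) * γ ^ (-m) < 0 := by
      rw [intervalIntegral.integral_same]
      have := mul_neg_of_neg_of_pos hrK (Real.rpow_pos_of_pos hγ (-m))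
      linarith
    -- value at δ₀
    have hφδ₀ : 0 < m * (∫ s in δ₀..γ, g s) + r * (K - K₀) * δ₀ ^ (-m) := by
      have hsplit := split δ₀ (γ/2) γ hδ₀pos hδ₀γ2.le hγ2γ.le
      have hA : 0 < m * ∫ s in δ₀..(γ/2), g s :=
        mul_pos_of_neg_of_neg hm (intNeg _ _ hδ₀pos hδ₀γ2 (by linarith))
      have hEq : r * (K - K₀) * δ₀ ^ (-m) = -(r * (K₀ - K) * δ₀ ^ (-m)) := by ring
      rw [hsplit]
      rw [hEq]
      linarith
    -- continuity on [δ₀, γ]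
    have hcont : ContinuousOn
        (fun δ => m * (∫ s in δ..γ, g s) + r * (K - K₀) * δ ^ (-m)) (Set.Icc δ₀ γ) := by
      have hIcont : ContinuousOn (fun δ => ∫ s in δ..γ, g s) (Set.Icc δ₀ γ) := by
        have := intervalIntegral.continuousOn_primitive_interval_left
          (f := g) (μ := volume) (a := δ₀) (b := γ) (by
            rw [Set.uIcc_of_le hδ₀γ.le]
            exact (hgInt γ hγ).mono_set fun s hs => ⟨hδ₀pos.trans_le hs.1, hs.2⟩)
        rwa [Set.uIcc_of_le hδ₀γ.le] at this
      have hpcont : ContinuousOn (fun δ : ℝ => δ ^ (-m)) (Set.Icc δ₀ γ) := fun x hx =>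
        (Real.continuousAt_rpow_const x (-m)
          (Or.inl (hδ₀pos.trans_le hx.1).ne')).continuousWithinAt
      exact (continuousOn_const.mul hIcont).add (continuousOn_const.mul hpcont)
    obtain ⟨δ, hδmem, hδeq⟩ := intermediate_value_Ioo' hδ₀γ.le hcont ⟨hφγ, hφδ₀⟩
    have hδeq2 : m * (∫ s in δ..γ, g s) + r * (K - K₀) * δ ^ (-m) = 0 := hδeq
    refine ⟨δ, ⟨⟨hδ₀pos.trans hδmem.1, hδmem.2⟩, hδeq⟩, ?_⟩
    rintro δ' ⟨⟨h1', h2'⟩, heq'⟩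
    by_contra hne
    rcases lt_or_gt_of_ne hne with hlt | hlt
    · have := anti γ δ' δ hγβ h1' hlt hδmem.2.le
      linarith
    · have := anti γ δ δ' hγβ (hδ₀pos.trans hδmem.1) hlt h2'.le
      linarith
  · -- strict monotonicity of ℓ
    intro ell hell γ₁ hγ₁ γ₂ hγ₂ h12
    obtain ⟨⟨hℓ1pos, hℓ1lt⟩, heq1⟩ := hell γ₁ hγ₁.1 hγ₁.2
    obtain ⟨⟨hℓ2pos, hℓ2lt⟩, heq2⟩ := hell γ₂ hγ₂.1 hγ₂.2
    have hpos : 0 < m * ∫ s in γ₁..γ₂, g s :=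
      mul_pos_of_neg_of_neg hm (intNeg _ _ hγ₁.1 h12 hγ₂.2)
    have heq1' : m * (∫ s in ell γ₁..γ₁, g s) + r * (K - K₀) * (ell γ₁) ^ (-m) = 0 := heq1
    have heq2' : m * (∫ s in ell γ₂..γ₂, g s) + r * (K - K₀) * (ell γ₂) ^ (-m) = 0 := heq2
    have hΦ : 0 < m * (∫ s in ell γ₁..γ₂, g s) + r * (K - K₀) * (ell γ₁) ^ (-m) := by
      rw [split (ell γ₁) γ₁ γ₂ hℓ1pos hℓ1lt.le h12.le]
      have : m * ((∫ s in ell γ₁..γ₁, g s) + ∫ s in γ₁..γ₂, g s)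
          = m * (∫ s in ell γ₁..γ₁, g s) + m * ∫ s in γ₁..γ₂, g s := by ring
      rw [this]
      linarith
    by_contra hle
    push_neg at hle
    rcases eq_or_lt_of_le hle with heq | hlt
    · rw [heq] at heq2'
      linarith
    · have := anti γ₂ (ell γ₂) (ell γ₁) hγ₂.2 hℓ2pos hlt
        (le_of_lt (hℓ1lt.trans h12))
      linarith
end

section
/- Suppose K < 0 and h(0) + rK < 0, let δ† > 0 be the unique solution of ∫_δ^∞ s^{−n−1}[h(s) + rK] ds = 0, and define H₁(α) = −rK₁α^{−n} − n∫_{δ†}^α s^{−n−1}[h(s) + rK] ds for α ≥ δ†. Set ᾰ := inf{x > 0 : h(x) + rK − rK₁ ≥ 0} (which satisfies ᾰ > δ†). Then there exists a unique α̂ ∈ (δ†, ᾰ) such that H₁(α) < 0 for all α ∈ [δ†, α̂) and H₁(α) > 0 for all α ∈ (α̂, ∞). -/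
open MeasureTheory Set Filter Topology

set_option linter.unusedVariables false

/-!
Put `ψ = h + rK - rK₁`. The equation defining `δ†` turns `H₁(α)` into `n ∫_α^∞ s^{-n-1} ψ(s) ds`,
which has the sign of the scaled tail `α^n ∫_α^∞ s^{-n-1} ψ(s) ds`. This is continuous and strictly
increasing in `α`, equals `-rK₁/n < 0` at `δ†`, and is positive at any `α` beyond which `ψ ≥ 0`
(as `ψ → ∞`); in particular at `ᾰ`, which forces `δ† < ᾰ`. The intermediate value theorem gives `α̂`.
-/

theorem existsUnique_sign_change_s17 {φ F : ℝ → ℝ} {a b : ℝ} (hab : a ≤ b)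
    (hF : StrictMonoOn F (Ici a)) (hcont : ContinuousOn F (Icc a b)) (ha : F a < 0)
    (hb : 0 < F b) (hsign : ∀ x, a ≤ x → SignType.sign (φ x) = SignType.sign (F x)) :
    ∃! c, (a < c ∧ c < b) ∧ (∀ x, a ≤ x → x < c → φ x < 0) ∧ (∀ x, c < x → 0 < φ x) := by
  have neg_iff (x : ℝ) (hx : a ≤ x) : φ x < 0 ↔ F x < 0 := by
    rw [← sign_eq_neg_one_iff, hsign x hx, sign_eq_neg_one_iff]
  have pos_iff (x : ℝ) (hx : a ≤ x) : 0 < φ x ↔ 0 < F x := by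
    rw [← sign_eq_one_iff, hsign x hx, sign_eq_one_iff]
  obtain ⟨c, ⟨hac, hcb⟩, hFc⟩ := intermediate_value_Icc hab hcont ⟨ha.le, hb.le⟩
  have left (x : ℝ) (hax : a ≤ x) (hxc : x < c) : φ x < 0 :=
    (neg_iff x hax).2 (hFc ▸ hF hax hac hxc)
  have right (x : ℝ) (hcx : c < x) : 0 < φ x :=
    (pos_iff x (hac.trans hcx.le)).2 (hFc ▸ hF hac (hac.trans hcx.le) hcx)
  have hac' : a < c := hac.lt_of_ne (by rintro rfl; exact ha.ne hFc)
  have hcb' : c < b := hcb.lt_of_ne (by rintro rfl; exact hb.ne' hFc)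
  refine ⟨c, ⟨⟨hac', hcb'⟩, left, right⟩, ?_⟩
  rintro y ⟨⟨hay, -⟩, lefty, righty⟩
  have no_gap {u v : ℝ} (hau : a < u) (hv : ∀ x, a ≤ x → x < v → φ x < 0)
      (hu : ∀ x, u < x → 0 < φ x) : v ≤ u := by
    by_contra! huv
    have hmid := hu ((u + v) / 2) (by linarith)
    exact hmid.not_gt (hv _ (by linarith) (by linarith))
  exact le_antisymm (no_gap hac' lefty right) (no_gap hay left righty)

section WeightedTail

variable {g f : ℝ → ℝ} {n a b : ℝ}

theorem integrableOn_Ioi_rpow_neg_sub_one (hn : 0 < n) (ha : 0 < a) :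
    IntegrableOn (fun s : ℝ => s ^ (-n - 1)) (Ioi a) :=
  integrableOn_Ioi_rpow_of_lt (by linarith) ha

theorem integral_Ioi_rpow_neg_sub_one (hn : 0 < n) (ha : 0 < a) :
    ∫ s in Ioi a, s ^ (-n - 1) = a ^ (-n) / n := by
  rw [integral_Ioi_rpow_of_lt (by linarith) ha, show -n - 1 + 1 = -n by ring, div_neg,
    neg_div, neg_neg]

theorem integrableOn_Ioi_rpow_mul_add_const (hn : 0 < n) (ha : 0 < a)
    (hg : IntegrableOn (fun s => s ^ (-n - 1) * g s) (Ioi a)) (c : ℝ) :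
    IntegrableOn (fun s => s ^ (-n - 1) * (g s + c)) (Ioi a) := by
  refine (hg.add ((integrableOn_Ioi_rpow_neg_sub_one hn ha).mul_const c)).congr_fun
    (fun s _ => ?_) measurableSet_Ioi
  simp only [Pi.add_apply, mul_add]

theorem integrableOn_Ioi_rpow_mul_sub_const (hn : 0 < n) (ha : 0 < a)
    (hg : IntegrableOn (fun s => s ^ (-n - 1) * g s) (Ioi a)) (c : ℝ) :
    IntegrableOn (fun s => s ^ (-n - 1) * (g s - c)) (Ioi a) := by
  simpa only [sub_eq_add_neg] using integrableOn_Ioi_rpow_mul_add_const hn ha hg (-c)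

theorem integral_Ioi_rpow_mul_sub_const (hn : 0 < n) (ha : 0 < a)
    (hg : IntegrableOn (fun s => s ^ (-n - 1) * g s) (Ioi a)) (c : ℝ) :
    ∫ s in Ioi a, s ^ (-n - 1) * (g s - c) =
      (∫ s in Ioi a, s ^ (-n - 1) * g s) - c * a ^ (-n) / n := by
  simp only [mul_sub]
  rw [integral_sub hg ((integrableOn_Ioi_rpow_neg_sub_one hn ha).mul_const c), integral_mul_const,
    integral_Ioi_rpow_neg_sub_one hn ha]
  ring

theorem mul_integral_Ioi_sub_const_eq_of_integral_Ioi_eq_zero {δ α : ℝ} (hn : 0 < n)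
    (hδ : 0 < δ) (hint : ∀ x, 0 < x → IntegrableOn (fun s => s ^ (-n - 1) * g s) (Ioi x))
    (hzero : ∫ s in Ioi δ, s ^ (-n - 1) * g s = 0) (hα : δ ≤ α) (c : ℝ) :
    n * ∫ s in Ioi α, s ^ (-n - 1) * (g s - c) =
      -c * α ^ (-n) - n * ∫ s in δ..α, s ^ (-n - 1) * g s := by
  have hα₀ : 0 < α := hδ.trans_le hα
  rw [← intervalIntegral.integral_Ioi_sub_Ioi (hint δ hδ) hα, hzero,
    integral_Ioi_rpow_mul_sub_const hn hα₀ (hint α hα₀)]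
  field_simp
  ring

theorem integral_Ioi_rpow_mul_pos (hn : 0 < n) (ha : 0 < a) (hg₀ : ∀ s, a < s → 0 ≤ g s)
    (hg : Tendsto g atTop atTop) (hint : IntegrableOn (fun s => s ^ (-n - 1) * g s) (Ioi a)) :
    0 < ∫ s in Ioi a, s ^ (-n - 1) * g s := by
  obtain ⟨T, hT⟩ := eventually_atTop.1 (hg.eventually_ge_atTop 1)
  set T' := max T (a + 1)
  have haT' : a < T' := lt_max_of_lt_right (lt_add_one a)
  have hT'₀ : 0 < T' := ha.trans haT'
  calc 0 < T' ^ (-n) / n := by positivity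
    _ = ∫ s in Ioi T', s ^ (-n - 1) := (integral_Ioi_rpow_neg_sub_one hn hT'₀).symm
    _ ≤ ∫ s in Ioi T', s ^ (-n - 1) * g s := by
        refine setIntegral_mono_on (integrableOn_Ioi_rpow_neg_sub_one hn hT'₀)
          (hint.mono_set (Ioi_subset_Ioi haT'.le)) measurableSet_Ioi fun s hs => ?_
        have hs₀ : 0 < s := hT'₀.trans hs
        have : 1 ≤ g s := hT s ((le_max_left _ _).trans hs.le)
        nlinarith [Real.rpow_pos_of_pos hs₀ (-n - 1)]
    _ ≤ ∫ s in Ioi a, s ^ (-n - 1) * g s := by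
        refine setIntegral_mono_set hint ?_ (Ioi_subset_Ioi haT'.le).eventuallyLE
        refine (ae_restrict_iff' measurableSet_Ioi).2 (ae_of_all _ fun s hs => ?_)
        exact mul_nonneg (Real.rpow_pos_of_pos (ha.trans hs) _).le (hg₀ s hs)

theorem continuousOn_integral_Ioi (hf : IntegrableOn f (Ioi a)) :
    ContinuousOn (fun x => ∫ s in Ioi x, f s) (Icc a b) := by
  rcases lt_or_ge b a with hba | hab
  · simp [Icc_eq_empty_of_lt hba]
  have hprim : ContinuousOn (fun x => ∫ s in a..x, f s) (Icc a b) :=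
    (intervalIntegral.continuousOn_primitive_interval'
      ((intervalIntegrable_iff_integrableOn_Ioc_of_le hab).2
        (hf.mono_set Ioc_subset_Ioi_self)) left_mem_uIcc).mono Icc_subset_uIcc
  refine ((continuousOn_const (c := ∫ s in Ioi a, f s)).sub hprim).congr fun x hx => ?_
  rw [Pi.sub_apply, ← intervalIntegral.integral_Ioi_sub_Ioi hf hx.1, sub_sub_cancel]

theorem strictMonoOn_rpow_mul_integral_Ioi (hn : 0 < n) (hmono : MonotoneOn g (Ioi 0))
    (hg : Tendsto g atTop atTop)
    (hint : ∀ a, 0 < a → IntegrableOn (fun s => s ^ (-n - 1) * g s) (Ioi a)) :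
    StrictMonoOn (fun a => a ^ n * ∫ s in Ioi a, s ^ (-n - 1) * g s) (Ioi 0) := by
  intro a₁ (ha₁ : 0 < a₁) a₂ (ha₂ : 0 < a₂) h12
  -- Shifting `g` by `-g a₂` changes the scaled tail by a constant, and makes the integrand
  -- nonpositive on `(a₁, a₂]` and nonnegative beyond `a₂`.
  set c := g a₂
  have hint' (a : ℝ) (ha : 0 < a) : IntegrableOn (fun s => s ^ (-n - 1) * (g s - c)) (Ioi a) :=
    integrableOn_Ioi_rpow_mul_sub_const hn ha (hint a ha) c
  set D := fun a => ∫ s in Ioi a, s ^ (-n - 1) * (g s - c)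
  have hshift (a : ℝ) (ha : 0 < a) :
      a ^ n * ∫ s in Ioi a, s ^ (-n - 1) * g s = a ^ n * D a + c / n := by
    have hpow : a ^ n * a ^ (-n) = 1 := by rw [← Real.rpow_add ha, add_neg_cancel, Real.rpow_zero]
    simp only [D, integral_Ioi_rpow_mul_sub_const hn ha (hint a ha)]
    field_simp
    linear_combination c * hpow
  have hD₂ : 0 < D a₂ :=
    integral_Ioi_rpow_mul_pos hn ha₂ (fun s hs => sub_nonneg.2 (hmono ha₂ (ha₂.trans hs) hs.le))
      (tendsto_atTop_add_const_right _ _ hg) (hint' a₂ ha₂)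
  have hD₁₂ : D a₁ ≤ D a₂ := by
    rw [← sub_nonpos, intervalIntegral.integral_Ioi_sub_Ioi (hint' a₁ ha₁) h12.le,
      intervalIntegral.integral_of_le h12.le]
    refine setIntegral_nonpos measurableSet_Ioc fun s ⟨hs₁, hs₂⟩ => ?_
    have hs₀ : 0 < s := ha₁.trans hs₁
    exact mul_nonpos_of_nonneg_of_nonpos (Real.rpow_pos_of_pos hs₀ _).le
      (sub_nonpos.2 (hmono hs₀ ha₂ hs₂))
  have hpow : a₁ ^ n < a₂ ^ n := Real.rpow_lt_rpow ha₁.le h12 hn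
  simp only [hshift a₁ ha₁, hshift a₂ ha₂]
  nlinarith [Real.rpow_pos_of_pos ha₁ n]

end WeightedTail

theorem MonotoneOn.nonneg_of_csInf_lt {g : ℝ → ℝ} {s : ℝ} (hg : MonotoneOn g (Ioi 0))
    (hne : {x | 0 < x ∧ 0 ≤ g x}.Nonempty) (hs : sInf {x | 0 < x ∧ 0 ≤ g x} < s) : 0 ≤ g s := by
  obtain ⟨y, ⟨hy₀, hy⟩, hys⟩ := exists_lt_of_csInf_lt hne hs
  exact hy.trans (hg hy₀ (hy₀.trans hys) hys.le)

theorem statement_17_general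
    (r n : ℝ) (h : ℝ → ℝ)
    (hr : 0 < r) (hn : 0 < n)
    (hMono : MonotoneOn h (Set.Ioi 0))
    (hTop : Tendsto h atTop atTop)
    (hIntTop : ∀ x : ℝ, 0 < x →
      IntegrableOn (fun s : ℝ => s ^ (-n - 1) * h s) (Set.Ioi x))
    (K₁ K : ℝ) (hK₁ : 0 < K₁)
    (δdag : ℝ) (hδdag : 0 < δdag)
    (hδdagEq : (∫ s in Set.Ioi δdag, s ^ (-n - 1) * (h s + r * K)) = 0) :
    δdag < sInf {x : ℝ | 0 < x ∧ 0 ≤ h x + r * K - r * K₁} ∧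
    ∃! αhat : ℝ,
      (δdag < αhat ∧ αhat < sInf {x : ℝ | 0 < x ∧ 0 ≤ h x + r * K - r * K₁}) ∧
      (∀ α : ℝ, δdag ≤ α → α < αhat →
        -(r * K₁) * α ^ (-n) - n * (∫ s in δdag..α, s ^ (-n - 1) * (h s + r * K)) < 0) ∧
      (∀ α : ℝ, αhat < α →
        0 < -(r * K₁) * α ^ (-n) - n * ∫ s in δdag..α, s ^ (-n - 1) * (h s + r * K)) := by
  have hint (x : ℝ) (hx : 0 < x) :
      IntegrableOn (fun s => s ^ (-n - 1) * (h s + r * K)) (Ioi x) :=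
    integrableOn_Ioi_rpow_mul_add_const hn hx (hIntTop x hx) (r * K)
  set ψ : ℝ → ℝ := fun s => h s + r * K - r * K₁
  have hintψ (x : ℝ) (hx : 0 < x) : IntegrableOn (fun s => s ^ (-n - 1) * ψ s) (Ioi x) :=
    integrableOn_Ioi_rpow_mul_sub_const hn hx (hint x hx) _
  have hψmono : MonotoneOn ψ (Ioi 0) := fun x hx y hy hxy => by
    simp only [ψ]; linarith [hMono hx hy hxy]
  have hψtop : Tendsto ψ atTop atTop :=
    tendsto_atTop_add_const_right _ _ (tendsto_atTop_add_const_right _ _ hTop)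
  have hH (α : ℝ) (hα : δdag ≤ α) :
      n * ∫ s in Ioi α, s ^ (-n - 1) * ψ s =
        -(r * K₁) * α ^ (-n) - n * ∫ s in δdag..α, s ^ (-n - 1) * (h s + r * K) :=
    mul_integral_Ioi_sub_const_eq_of_integral_Ioi_eq_zero hn hδdag hint hδdagEq hα _
  have htail_δ : ∫ s in Ioi δdag, s ^ (-n - 1) * ψ s < 0 := by
    refine neg_of_mul_neg_right ?_ hn.le
    rw [hH δdag le_rfl, intervalIntegral.integral_same, mul_zero, sub_zero, neg_mul, neg_neg_iff_pos]
    exact mul_pos (mul_pos hr hK₁) (Real.rpow_pos_of_pos hδdag _)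
  have hS : {x | 0 < x ∧ 0 ≤ ψ x}.Nonempty :=
    ((hψtop.eventually_ge_atTop 0).and (eventually_gt_atTop 0)).exists.imp fun _ hx => hx.symm
  have hδ_lt : δdag < sInf {x | 0 < x ∧ 0 ≤ ψ x} := by
    by_contra! hle
    exact htail_δ.not_ge (integral_Ioi_rpow_mul_pos hn hδdag
      (fun s hs => hψmono.nonneg_of_csInf_lt hS (hle.trans_lt hs)) hψtop (hintψ δdag hδdag)).le
  have hαbar : 0 < sInf {x | 0 < x ∧ 0 ≤ ψ x} := hδdag.trans hδ_lt
  refine ⟨hδ_lt, existsUnique_sign_change_s17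
    (F := fun α => α ^ n * ∫ s in Ioi α, s ^ (-n - 1) * ψ s) hδ_lt.le
    ((strictMonoOn_rpow_mul_integral_Ioi hn hψmono hψtop hintψ).mono (Ici_subset_Ioi.2 hδdag))
    ((continuousOn_id.rpow_const fun _ _ => Or.inr hn.le).mul
      (continuousOn_integral_Ioi (hintψ δdag hδdag)))
    (mul_neg_of_pos_of_neg (Real.rpow_pos_of_pos hδdag n) htail_δ)
    (mul_pos (Real.rpow_pos_of_pos hαbar n) (integral_Ioi_rpow_mul_pos hn hαbar
      (fun _ => hψmono.nonneg_of_csInf_lt hS) hψtop (hintψ _ hαbar))) fun x hx => ?_⟩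
  rw [← hH x hx, sign_mul, sign_mul, sign_pos hn,
    sign_pos (Real.rpow_pos_of_pos (hδdag.trans_le hx) n)]

theorem statement_17
    (r b σ m n : ℝ) (h : ℝ → ℝ)
    (hr : 0 < r) (hσ : σ ≠ 0) (hm : m < 0) (hn : 0 < n)
    (hmRoot : σ ^ 2 * m ^ 2 + (b - σ ^ 2) * m - r = 0)
    (hnRoot : σ ^ 2 * n ^ 2 + (b - σ ^ 2) * n - r = 0)
    (hMono : MonotoneOn h (Set.Ioi 0))
    (hRC : ∀ x : ℝ, 0 < x → ContinuousWithinAt h (Set.Ici x) x)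
    (hTop : Tendsto h atTop atTop)
    (hIntZero : ∀ x : ℝ, 0 < x →
      IntegrableOn (fun s : ℝ => s ^ (-m - 1) * h s) (Set.Ioc 0 x))
    (hIntTop : ∀ x : ℝ, 0 < x →
      IntegrableOn (fun s : ℝ => s ^ (-n - 1) * h s) (Set.Ioi x))
    (K₁ K : ℝ) (hK₁ : 0 < K₁) (hK : K < 0)
    (hcond : hZero h + ((r * K : ℝ) : EReal) < 0)
    (δdag : ℝ) (hδdag : 0 < δdag)
    (hδdagEq : (∫ s in Set.Ioi δdag, s ^ (-n - 1) * (h s + r * K)) = 0) :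
    δdag < sInf {x : ℝ | 0 < x ∧ 0 ≤ h x + r * K - r * K₁} ∧
    ∃! αhat : ℝ,
      (δdag < αhat ∧ αhat < sInf {x : ℝ | 0 < x ∧ 0 ≤ h x + r * K - r * K₁}) ∧
      (∀ α : ℝ, δdag ≤ α → α < αhat →
        -(r * K₁) * α ^ (-n) - n * (∫ s in δdag..α, s ^ (-n - 1) * (h s + r * K)) < 0) ∧
      (∀ α : ℝ, αhat < α →
        0 < -(r * K₁) * α ^ (-n) - n * ∫ s in δdag..α, s ^ (-n - 1) * (h s + r * K)) :=
  statement_17_general r n h hr hn hMono hTop hIntTop K₁ K hK₁ δdag hδdag hδdagEq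
end

section
/- Suppose K < 0 < K₀ and let β > 0 satisfy h(x) + rK₀ < 0 for all x ∈ (0, β]. For 0 < δ ≤ γ ≤ β define G₃(δ, γ) = n∫_δ^∞ s^{−n−1}[h(s) + rK] ds − n∫_γ^β s^{−n−1}[h(s) + rK₀] ds. Then: (i) for each fixed γ ∈ (0, β], there exists δ ∈ (0, γ) with G₃(δ, γ) = 0 if and only if G₃(γ, γ) > 0, and such δ is unique; (ii) there exists γ ∈ (0, β] with G₃(γ, γ) > 0 if and only if n∫_β^∞ s^{−n−1}[h(s) + rK] ds > 0, in which case there is a unique γ̂ ∈ (0, β) such that G₃(γ, γ) > 0 holds exactly for γ ∈ (γ̂, β]. -/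
open MeasureTheory Set Filter Topology

set_option linter.unusedVariables false

/-- `G₃(δ, γ) = n ∫_δ^∞ s^{-n-1}[h(s) + rK] ds - n ∫_γ^β s^{-n-1}[h(s) + rK₀] ds`. -/
noncomputable def G3fun (r n K₀ K β : ℝ) (h : ℝ → ℝ) (δ γ : ℝ) : ℝ :=
  n * (∫ s in Set.Ioi δ, s ^ (-n - 1) * (h s + r * K))
    - n * ∫ s in γ..β, s ^ (-n - 1) * (h s + r * K₀)

theorem statement_18
    (r b σ m n : ℝ) (h : ℝ → ℝ)
    (hr : 0 < r) (hσ : σ ≠ 0) (hm : m < 0) (hn : 0 < n)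
    (hmRoot : σ ^ 2 * m ^ 2 + (b - σ ^ 2) * m - r = 0)
    (hnRoot : σ ^ 2 * n ^ 2 + (b - σ ^ 2) * n - r = 0)
    (hMono : MonotoneOn h (Set.Ioi 0))
    (hRC : ∀ x : ℝ, 0 < x → ContinuousWithinAt h (Set.Ici x) x)
    (hTop : Tendsto h atTop atTop)
    (hIntZero : ∀ x : ℝ, 0 < x →
      IntegrableOn (fun s : ℝ => s ^ (-m - 1) * h s) (Set.Ioc 0 x))
    (hIntTop : ∀ x : ℝ, 0 < x →
      IntegrableOn (fun s : ℝ => s ^ (-n - 1) * h s) (Set.Ioi x))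
    (K₀ K : ℝ) (hK₀ : 0 < K₀) (hK : K < 0)
    (β : ℝ) (hβ : 0 < β) (hβh : ∀ x : ℝ, 0 < x → x ≤ β → h x + r * K₀ < 0) :
    (∀ γ : ℝ, 0 < γ → γ ≤ β →
      ((∃ δ : ℝ, 0 < δ ∧ δ < γ ∧ G3fun r n K₀ K β h δ γ = 0) ↔
        0 < G3fun r n K₀ K β h γ γ) ∧
      (∀ δ δ' : ℝ, 0 < δ → δ < γ → G3fun r n K₀ K β h δ γ = 0 →
        0 < δ' → δ' < γ → G3fun r n K₀ K β h δ' γ = 0 → δ = δ')) ∧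
    ((∃ γ : ℝ, 0 < γ ∧ γ ≤ β ∧ 0 < G3fun r n K₀ K β h γ γ) ↔
      0 < n * ∫ s in Set.Ioi β, s ^ (-n - 1) * (h s + r * K)) ∧
    (0 < n * (∫ s in Set.Ioi β, s ^ (-n - 1) * (h s + r * K)) →
      ∃! γhat : ℝ, (0 < γhat ∧ γhat < β) ∧
        ∀ γ : ℝ, 0 < γ → γ ≤ β → (0 < G3fun r n K₀ K β h γ γ ↔ γhat < γ)) := by
  have hn1 : (-n - 1 : ℝ) < -1 := by linarith
  have hpInt : ∀ x : ℝ, 0 < x →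
      IntegrableOn (fun s : ℝ => s ^ (-n - 1)) (Set.Ioi x) :=
    fun x hx => integrableOn_Ioi_rpow_of_lt hn1 hx
  have hgInt : ∀ x : ℝ, 0 < x →
      IntegrableOn (fun s : ℝ => s ^ (-n - 1) * (h s + r * K)) (Set.Ioi x) := by
    intro x hx
    have h1 : IntegrableOn (fun s : ℝ => s ^ (-n - 1) * h s + s ^ (-n - 1) * (r * K))
        (Set.Ioi x) := (hIntTop x hx).add ((hpInt x hx).mul_const (r * K))
    exact h1.congr_fun (fun s _ => by ring) measurableSet_Ioi
  have hg₀Int : ∀ x : ℝ, 0 < x →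
      IntegrableOn (fun s : ℝ => s ^ (-n - 1) * (h s + r * K₀)) (Set.Ioi x) := by
    intro x hx
    have h1 : IntegrableOn (fun s : ℝ => s ^ (-n - 1) * h s + s ^ (-n - 1) * (r * K₀))
        (Set.Ioi x) := (hIntTop x hx).add ((hpInt x hx).mul_const (r * K₀))
    exact h1.congr_fun (fun s _ => by ring) measurableSet_Ioi
  have hsplit : ∀ a c : ℝ, 0 < a → a ≤ c →
      (∫ s in Set.Ioi a, s ^ (-n - 1) * (h s + r * K))
        = (∫ s in Set.Ioc a c, s ^ (-n - 1) * (h s + r * K))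
          + ∫ s in Set.Ioi c, s ^ (-n - 1) * (h s + r * K) := by
    intro a c ha hac
    rw [← Set.Ioc_union_Ioi_eq_Ioi hac,
      setIntegral_union (Set.Ioc_disjoint_Ioi le_rfl) measurableSet_Ioi
        ((hgInt a ha).mono_set Set.Ioc_subset_Ioi_self) (hgInt c (lt_of_lt_of_le ha hac))]
  have hPval : ∀ a c : ℝ, 0 < a → a ≤ c →
      (∫ s in Set.Ioc a c, s ^ (-n - 1)) = (a ^ (-n) - c ^ (-n)) / n := by
    intro a c ha hac
    rw [← intervalIntegral.integral_of_le hac,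
      integral_rpow (Or.inr ⟨hn1.ne, Set.notMem_uIcc_of_lt ha (ha.trans_le hac)⟩)]
    have e : (-n - 1 + 1 : ℝ) = -n := by ring
    rw [e]
    rw [div_eq_div_iff (by linarith) hn.ne']
    ring
  have hUbound : ∀ a c : ℝ, 0 < a → a ≤ c → c ≤ β →
      n * (∫ s in Set.Ioc a c, s ^ (-n - 1) * (h s + r * K))
        ≤ r * (K - K₀) * (a ^ (-n) - c ^ (-n)) := by
    intro a c ha hac hcβ
    have hle : ∀ s ∈ Set.Ioc a c, s ^ (-n - 1) * (h s + r * K)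
        ≤ (r * (K - K₀)) * s ^ (-n - 1) := by
      intro s hs
      have hs0 : 0 < s := ha.trans hs.1
      have hp : (0 : ℝ) < s ^ (-n - 1) := Real.rpow_pos_of_pos hs0 _
      have hb := hβh s hs0 (hs.2.trans hcβ)
      nlinarith
    have hmono := setIntegral_mono_on
      ((hgInt a ha).mono_set Set.Ioc_subset_Ioi_self)
      (((hpInt a ha).mono_set Set.Ioc_subset_Ioi_self).const_mul (r * (K - K₀)))
      measurableSet_Ioc hle
    rw [integral_const_mul, hPval a c ha hac] at hmono
    calc n * (∫ s in Set.Ioc a c, s ^ (-n - 1) * (h s + r * K))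
        ≤ n * (r * (K - K₀) * ((a ^ (-n) - c ^ (-n)) / n)) :=
          mul_le_mul_of_nonneg_left hmono hn.le
      _ = r * (K - K₀) * (a ^ (-n) - c ^ (-n)) := by field_simp
  have hGsplit : ∀ δ γ' : ℝ, 0 < δ → δ ≤ γ' → γ' ≤ β →
      G3fun r n K₀ K β h δ γ'
        = n * (∫ s in Set.Ioi β, s ^ (-n - 1) * (h s + r * K))
          + n * (∫ s in Set.Ioc δ γ', s ^ (-n - 1) * (h s + r * K))
          + r * (K - K₀) * (γ' ^ (-n) - β ^ (-n)) := by
    intro δ γ' hδ hδγ hγβ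
    have hγ' : 0 < γ' := hδ.trans_le hδγ
    simp only [G3fun]
    rw [hsplit δ γ' hδ hδγ, hsplit γ' β hγ' hγβ, intervalIntegral.integral_of_le hγβ]
    have e1 : ∀ s ∈ Set.Ioc γ' β, s ^ (-n - 1) * (h s + r * K₀)
        = s ^ (-n - 1) * (h s + r * K) + (r * (K₀ - K)) * s ^ (-n - 1) :=
      fun s _ => by ring
    rw [setIntegral_congr_fun measurableSet_Ioc e1,
      integral_add ((hgInt γ' hγ').mono_set Set.Ioc_subset_Ioi_self)
        (((hpInt γ' hγ').mono_set Set.Ioc_subset_Ioi_self).const_mul (r * (K₀ - K))),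
      integral_const_mul, hPval γ' β hγ' hγβ]
    field_simp
    ring
  have hFval : ∀ γ' : ℝ, 0 < γ' → γ' ≤ β →
      G3fun r n K₀ K β h γ' γ'
        = n * (∫ s in Set.Ioi β, s ^ (-n - 1) * (h s + r * K))
          + r * (K - K₀) * (γ' ^ (-n) - β ^ (-n)) := by
    intro γ' hγ' hγβ
    rw [hGsplit γ' γ' hγ' le_rfl hγβ]
    simp [Set.Ioc_self]
  have hStrict : ∀ a c γ' : ℝ, 0 < a → a < c → c ≤ γ' → γ' ≤ β →
      G3fun r n K₀ K β h a γ' < G3fun r n K₀ K β h c γ' := by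
    intro a c γ' ha hac hcγ hγβ
    have hc : 0 < c := ha.trans hac
    have hb := hUbound a c ha hac.le (hcγ.trans hγβ)
    have hpow : c ^ (-n : ℝ) < a ^ (-n : ℝ) :=
      Real.rpow_lt_rpow_of_neg ha hac (by linarith)
    have hneg : r * (K - K₀) * (a ^ (-n : ℝ) - c ^ (-n : ℝ)) < 0 :=
      mul_neg_of_neg_of_pos (by nlinarith) (by linarith)
    simp only [G3fun]
    have hs := hsplit a c ha hac.le
    rw [hs]
    rw [mul_add]
    linarith
  refine ⟨?_, ?_, ?_⟩
  · -- part (i)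
    intro γ hγ0 hγβ
    constructor
    · constructor
      · rintro ⟨δ, hδ0, hδγ, hδeq⟩
        have := hStrict δ γ γ hδ0 hδγ le_rfl hγβ
        rwa [hδeq] at this
      · intro hF
        -- IVT construction
        set D : ℝ := r * (K₀ - K) with hDdef
        have hD : 0 < D := by rw [hDdef]; nlinarith
        set Fγ : ℝ := G3fun r n K₀ K β h γ γ with hFγdef
        set M : ℝ := max (γ ^ (-n : ℝ) + Fγ / D) 1 with hMdef
        have hM : 0 < M := lt_of_lt_of_le one_pos (le_max_right _ _)
        set x₀ : ℝ := (2 * M) ^ (-(1 / n) : ℝ) with hx₀def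
        have hx₀ : 0 < x₀ := Real.rpow_pos_of_pos (by linarith) _
        have hx₀pow : x₀ ^ (-n : ℝ) = 2 * M := by
          rw [hx₀def, ← Real.rpow_mul (by linarith : (0:ℝ) ≤ 2 * M),
            show (-(1 / n)) * (-n) = (1 : ℝ) by rw [neg_mul_neg, one_div_mul_cancel hn.ne'],
            Real.rpow_one]
        set a : ℝ := min (γ / 2) x₀ with hadef
        have ha0 : 0 < a := lt_min (by linarith) hx₀
        have haγ : a < γ := lt_of_le_of_lt (min_le_left _ _) (by linarith)
        have hapow : 2 * M ≤ a ^ (-n : ℝ) := by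
          rw [← hx₀pow]
          exact Real.rpow_le_rpow_of_nonpos ha0 (min_le_right _ _) (by linarith)
        have hTa : γ ^ (-n : ℝ) + Fγ / D < a ^ (-n : ℝ) :=
          lt_of_le_of_lt (le_max_left _ 1) (by linarith)
        have h7 : Fγ < D * (a ^ (-n : ℝ) - γ ^ (-n : ℝ)) := by
          have := (div_lt_iff₀ hD).mp (by linarith : Fγ / D < a ^ (-n : ℝ) - γ ^ (-n : ℝ))
          linarith
        have hFeq := hFval γ hγ0 hγβ
        have hG3a : G3fun r n K₀ K β h a γ < 0 := by
          rw [hGsplit a γ ha0 haγ.le hγβ]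
          have hb := hUbound a γ ha0 haγ.le hγβ
          have e : r * (K - K₀) * (a ^ (-n : ℝ) - γ ^ (-n : ℝ))
              = -(D * (a ^ (-n : ℝ) - γ ^ (-n : ℝ))) := by rw [hDdef]; ring
          linarith [hb, h7, hFeq]
        -- continuity of δ ↦ G3fun δ γ on [a, γ]
        have hIcc : IntegrableOn (fun s : ℝ => s ^ (-n - 1) * (h s + r * K))
            (Set.Icc a γ) := by
          refine (hgInt (a / 2) (by linarith)).mono_set ?_
          intro x hx; exact lt_of_lt_of_le (by linarith) hx.1
        have hii : ∀ x ∈ Set.Icc a γ,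
            IntervalIntegrable (fun s : ℝ => s ^ (-n - 1) * (h s + r * K)) volume a x := by
          intro x hx
          refine (hIcc.mono_set ?_).intervalIntegrable
          rw [Set.uIcc_of_le hx.1]
          exact Set.Icc_subset_Icc le_rfl hx.2
        have hcontP : ContinuousOn
            (fun x => ∫ t in a..x, t ^ (-n - 1) * (h t + r * K)) (Set.Icc a γ) := by
          have := intervalIntegral.continuousOn_primitive_interval
            (a := a) (b := γ) (μ := volume)
            (f := fun s : ℝ => s ^ (-n - 1) * (h s + r * K))
            (by rwa [Set.uIcc_of_le haγ.le])
          rwa [Set.uIcc_of_le haγ.le] at this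
        set φ : ℝ → ℝ := fun x =>
          (n * (∫ s in Set.Ioi β, s ^ (-n - 1) * (h s + r * K))
            + r * (K - K₀) * (γ ^ (-n : ℝ) - β ^ (-n : ℝ)))
          + n * ((∫ t in a..γ, t ^ (-n - 1) * (h t + r * K))
            - ∫ t in a..x, t ^ (-n - 1) * (h t + r * K)) with hφdef
        have hcontφ : ContinuousOn φ (Set.Icc a γ) :=
          continuousOn_const.add
            (continuousOn_const.mul (continuousOn_const.sub hcontP))
        have hEq : Set.EqOn (fun x => G3fun r n K₀ K β h x γ) φ (Set.Icc a γ) := by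
          intro x hx
          have hx0 : 0 < x := lt_of_lt_of_le ha0 hx.1
          have hIoc : (∫ s in Set.Ioc x γ, s ^ (-n - 1) * (h s + r * K))
              = (∫ t in a..γ, t ^ (-n - 1) * (h t + r * K))
                - ∫ t in a..x, t ^ (-n - 1) * (h t + r * K) := by
            rw [← intervalIntegral.integral_of_le hx.2,
              intervalIntegral.integral_interval_sub_left
                (hii γ ⟨haγ.le, le_rfl⟩) (hii x hx)]
          simp only [φ]
          rw [hGsplit x γ hx0 hx.2 hγβ, hIoc]
          ring
        have hcontG : ContinuousOn (fun x => G3fun r n K₀ K β h x γ) (Set.Icc a γ) :=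
          hcontφ.congr hEq
        have hsub := intermediate_value_Ioo haγ.le hcontG
        have h0mem : (0 : ℝ) ∈ Set.Ioo (G3fun r n K₀ K β h a γ)
            (G3fun r n K₀ K β h γ γ) := ⟨hG3a, hF⟩
        obtain ⟨δ, hδmem, hδeq⟩ := hsub h0mem
        exact ⟨δ, ha0.trans hδmem.1, hδmem.2, hδeq⟩
    · intro δ δ' h1 h2 h3 h4 h5 h6
      rcases lt_trichotomy δ δ' with hlt | heq | hgt
      · have := hStrict δ δ' γ h1 hlt h5.le hγβ
        rw [h3, h6] at this; exact absurd this (lt_irrefl 0)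
      · exact heq
      · have := hStrict δ' δ γ h4 hgt h2.le hγβ
        rw [h3, h6] at this; exact absurd this (lt_irrefl 0)
  · -- part (ii)
    constructor
    · rintro ⟨γ, hγ0, hγβ', hγF⟩
      rw [hFval γ hγ0 hγβ'] at hγF
      have hpow : β ^ (-n : ℝ) ≤ γ ^ (-n : ℝ) :=
        Real.rpow_le_rpow_of_nonpos hγ0 hγβ' (by linarith)
      have hneg : r * (K - K₀) * (γ ^ (-n : ℝ) - β ^ (-n : ℝ)) ≤ 0 :=
        mul_nonpos_of_nonpos_of_nonneg (by nlinarith) (by linarith)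
      linarith
    · intro hC
      exact ⟨β, hβ, le_rfl, by rw [hFval β hβ le_rfl]; simpa using hC⟩
  · -- part (iii)
    intro hC
    set Cv : ℝ := n * ∫ s in Set.Ioi β, s ^ (-n - 1) * (h s + r * K) with hCvdef
    set D : ℝ := r * (K₀ - K) with hDdef
    have hD : 0 < D := by rw [hDdef]; nlinarith
    set A : ℝ := β ^ (-n : ℝ) + Cv / D with hAdef
    have hβn : 0 < β ^ (-n : ℝ) := Real.rpow_pos_of_pos hβ _
    have hA0 : β ^ (-n : ℝ) < A := by
      rw [hAdef]; have : 0 < Cv / D := div_pos hC hD; linarith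
    have hApos : 0 < A := hβn.trans hA0
    set γh : ℝ := A ^ (-(1 / n) : ℝ) with hγhdef
    have hγh0 : 0 < γh := Real.rpow_pos_of_pos hApos _
    have hγhpow : γh ^ (-n : ℝ) = A := by
      rw [hγhdef, ← Real.rpow_mul hApos.le,
        show (-(1 / n)) * (-n) = (1 : ℝ) by rw [neg_mul_neg, one_div_mul_cancel hn.ne'],
        Real.rpow_one]
    have hγhβ : γh < β := by
      have h2 : A ^ (-(1 / n) : ℝ) < (β ^ (-n : ℝ)) ^ (-(1 / n) : ℝ) :=
        Real.rpow_lt_rpow_of_neg hβn hA0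
          (by have := one_div_pos.mpr hn; linarith)
      have h3 : (β ^ (-n : ℝ)) ^ (-(1 / n) : ℝ) = β := by
        rw [← Real.rpow_mul hβ.le,
          show (-n) * (-(1 / n)) = (1 : ℝ) by rw [neg_mul_neg, mul_one_div_cancel hn.ne'],
          Real.rpow_one]
      rw [hγhdef]; rw [h3] at h2; exact h2
    have hDC : D * (Cv / D) = Cv := by field_simp
    have hchar : ∀ γ' : ℝ, 0 < γ' → γ' ≤ β →
        (0 < G3fun r n K₀ K β h γ' γ' ↔ γh < γ') := by
      intro γ' hγ'0 hγ'β
      rw [hFval γ' hγ'0 hγ'β]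
      have hiff : γ' ^ (-n : ℝ) < A ↔ γh < γ' := by
        rw [← hγhpow]
        exact Real.rpow_lt_rpow_iff_of_neg hγ'0 hγh0 (by linarith)
      rw [← hiff, hAdef]
      have e : r * (K - K₀) * (γ' ^ (-n : ℝ) - β ^ (-n : ℝ))
          = -(D * (γ' ^ (-n : ℝ) - β ^ (-n : ℝ))) := by rw [hDdef]; ring
      constructor
      · intro H
        have h5 : D * (γ' ^ (-n : ℝ) - β ^ (-n : ℝ)) < Cv := by linarith
        have h6 : γ' ^ (-n : ℝ) - β ^ (-n : ℝ) < Cv / D :=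
          (lt_div_iff₀ hD).mpr (by linarith)
        linarith
      · intro H
        have h6 : γ' ^ (-n : ℝ) - β ^ (-n : ℝ) < Cv / D := by linarith
        have h5 : (γ' ^ (-n : ℝ) - β ^ (-n : ℝ)) * D < Cv := (lt_div_iff₀ hD).mp h6
        nlinarith
    have hFγh : G3fun r n K₀ K β h γh γh = 0 := by
      rw [hFval γh hγh0 hγhβ.le, hγhpow,
        show A - β ^ (-n : ℝ) = Cv / D by rw [hAdef]; ring,
        show r * (K - K₀) = -D by rw [hDdef]; ring]
      rw [neg_mul]
      rw [hDC]
      ring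
    refine ⟨γh, ⟨⟨hγh0, hγhβ⟩, hchar⟩, ?_⟩
    rintro y ⟨⟨hy0, hyβ⟩, hy⟩
    have h1 : ¬ (0 < G3fun r n K₀ K β h y y) := by
      rw [hy y hy0 hyβ.le]; exact lt_irrefl y
    have h2 : ¬ (γh < y) := fun hlt => h1 ((hchar y hy0 hyβ.le).mpr hlt)
    have h3 : ¬ (y < γh) := fun hlt => by
      have hx := (hy γh hγh0 hγhβ.le).mpr hlt
      rw [hFγh] at hx
      exact lt_irrefl 0 hx
    linarith [not_lt.mp h2, not_lt.mp h3]
end
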